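/- arXiv:2209.15551 — 7 statements merged into one kernel-verified Lean document; each statement's English description precedes it below -/
import Mathlib

section
/- Let μ ∈ (0, 1/2) and let M be the 2×2 matrix with rows (−1, 1) and (−μ(1−μ), −2). Suppose Y : [0,∞) → ℝ² is continuously differentiable, Y(s) ≠ 0 for all s ≥ 0, |Y(s)| → 0 as s → ∞, and there is K > 0 with |Y'(s) − M·Y(s)| ≤ K|Y(s)|² for all s ≥ 0. Then there exists c ∈ (0,1) such that c·e^{−5s} ≤ |Y(s)|² ≤ c^{−1}·e^{−(3/2)s} for all s ≥ 0. -/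
open scoped Topology

/-- The action of the matrix `M = [[-1, 1], [-μ(1-μ), -2]]` on a vector of `ℝ²`. -/
noncomputable def Mmul (μ : ℝ) (v : EuclideanSpace ℝ (Fin 2)) : EuclideanSpace ℝ (Fin 2) :=
  (EuclideanSpace.equiv (Fin 2) ℝ).symm ![-v 0 + v 1, -(μ * (1 - μ)) * v 0 - 2 * v 1]

/-!
The symmetric part of `M` has eigenvalues `-3 ± √(1 + b²)` with `b = 1 - μ(1-μ)`, and `b² ≤ 1`
keeps them inside `[-9/2, -31/20]`, strictly within `(-5, -3/2)`. Once `|Y|` is small, the error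
`K|Y|³` in `(|Y|²)' = 2⟨Y, MY⟩ + 2⟨Y, Y' - MY⟩` is absorbed by these gaps, so `R = |Y|²` satisfies
`-5R ≤ R' ≤ -(3/2)R` on a tail `[T, ∞)`: there `e^{5s}R` increases and `e^{3s/2}R` decreases.
On the compact `[0, T]` the positive continuous `R` is bounded above and away from zero.
-/

open Set Real

section ExpWeighted

variable {f f' : ℝ → ℝ} {l : ℝ} {D : Set ℝ}

theorem hasDerivAt_exp_mul_mul {x : ℝ} (hf : HasDerivAt f (f' x) x) :
    HasDerivAt (fun t => exp (l * t) * f t) (exp (l * x) * (l * f x + f' x)) x := by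
  have hexp : HasDerivAt (fun t => exp (l * t)) (exp (l * x) * l) x := by
    simpa using ((hasDerivAt_id x).const_mul l).exp
  exact (hexp.mul hf).congr_deriv (by ring)

theorem monotoneOn_exp_mul_mul_of_le_deriv (hD : Convex ℝ D) (hf : ContinuousOn f D)
    (hderiv : ∀ x ∈ interior D, HasDerivAt f (f' x) x)
    (hle : ∀ x ∈ interior D, -l * f x ≤ f' x) :
    MonotoneOn (fun t => exp (l * t) * f t) D := by
  refine monotoneOn_of_deriv_nonneg hD ((continuous_exp.comp_continuousOn
    (continuousOn_const.mul continuousOn_id)).mul hf)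
    (fun x hx => (hasDerivAt_exp_mul_mul (hderiv x hx)).differentiableAt.differentiableWithinAt)
    fun x hx => ?_
  rw [(hasDerivAt_exp_mul_mul (hderiv x hx)).deriv]
  have := hle x hx
  exact mul_nonneg (exp_pos _).le (by linarith)

theorem antitoneOn_exp_mul_mul_of_deriv_le (hD : Convex ℝ D) (hf : ContinuousOn f D)
    (hderiv : ∀ x ∈ interior D, HasDerivAt f (f' x) x)
    (hle : ∀ x ∈ interior D, f' x ≤ -l * f x) :
    AntitoneOn (fun t => exp (l * t) * f t) D := by
  have hneg := monotoneOn_exp_mul_mul_of_le_deriv (l := l) hD hf.neg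
    (fun x hx => (hderiv x hx).neg) fun x hx => by
      have := hle x hx
      simp only [Pi.neg_apply]
      linarith
  intro x hx y hy hxy
  simpa using hneg hx hy hxy

end ExpWeighted

theorem ContinuousOn.exists_isMinOn_Ici_of_monotoneOn {g : ℝ → ℝ} {a T : ℝ}
    (hg : ContinuousOn g (Ici a)) (hmono : MonotoneOn g (Ici T)) :
    ∃ x ∈ Ici a, IsMinOn g (Ici a) x := by
  set T' := max a T
  obtain ⟨x, hx, hmin⟩ := isCompact_Icc.exists_isMinOn (nonempty_Icc.2 (le_max_left a T))
    (hg.mono Icc_subset_Ici_self)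
  refine ⟨x, hx.1, fun s (hs : a ≤ s) => ?_⟩
  rcases le_total s T' with hsT | hTs
  · exact hmin ⟨hs, hsT⟩
  · calc g x ≤ g T' := hmin ⟨le_max_left a T, le_rfl⟩
      _ ≤ g s := hmono (le_max_right a T) ((le_max_right a T).trans hTs) hTs

theorem ContinuousOn.exists_isMaxOn_Ici_of_antitoneOn {g : ℝ → ℝ} {a T : ℝ}
    (hg : ContinuousOn g (Ici a)) (hanti : AntitoneOn g (Ici T)) :
    ∃ x ∈ Ici a, IsMaxOn g (Ici a) x := by
  obtain ⟨x, hx, hmin⟩ := hg.neg.exists_isMinOn_Ici_of_monotoneOn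
    fun s hs t ht hst => neg_le_neg (hanti hs ht hst)
  exact ⟨x, hx, by simpa using hmin.neg⟩

theorem exists_pos_mul_exp_neg_le_of_monotoneOn {R : ℝ → ℝ} {l T : ℝ}
    (hR : ContinuousOn R (Ici 0)) (hpos : ∀ s, 0 ≤ s → 0 < R s)
    (hmono : MonotoneOn (fun t => exp (l * t) * R t) (Ici T)) :
    ∃ m > 0, ∀ s, 0 ≤ s → m * exp (-l * s) ≤ R s := by
  obtain ⟨x, hx, hmin⟩ := ((continuous_exp.comp_continuousOn
    (continuousOn_const.mul continuousOn_id)).mul hR).exists_isMinOn_Ici_of_monotoneOn hmono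
  refine ⟨exp (l * x) * R x, mul_pos (exp_pos _) (hpos x hx), fun s hs => ?_⟩
  calc exp (l * x) * R x * exp (-l * s) ≤ exp (l * s) * R s * exp (-l * s) :=
        mul_le_mul_of_nonneg_right (hmin hs) (exp_pos _).le
    _ = R s := by rw [mul_right_comm, ← exp_add]; simp

theorem exists_pos_le_mul_exp_neg_of_antitoneOn {R : ℝ → ℝ} {l T : ℝ}
    (hR : ContinuousOn R (Ici 0)) (hpos : ∀ s, 0 ≤ s → 0 < R s)
    (hanti : AntitoneOn (fun t => exp (l * t) * R t) (Ici T)) :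
    ∃ C > 0, ∀ s, 0 ≤ s → R s ≤ C * exp (-l * s) := by
  obtain ⟨x, hx, hmax⟩ := ((continuous_exp.comp_continuousOn
    (continuousOn_const.mul continuousOn_id)).mul hR).exists_isMaxOn_Ici_of_antitoneOn hanti
  refine ⟨exp (l * x) * R x, mul_pos (exp_pos _) (hpos x hx), fun s hs => ?_⟩
  calc R s = exp (l * s) * R s * exp (-l * s) := by rw [mul_right_comm, ← exp_add]; simp
    _ ≤ exp (l * x) * R x * exp (-l * s) := mul_le_mul_of_nonneg_right (hmax hs) (exp_pos _).le

theorem hasDerivAt_norm_sq_of_differentiableOn_Ici {F : Type*} [NormedAddCommGroup F]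
    [InnerProductSpace ℝ F] {Y : ℝ → F} {a s : ℝ} (hY : DifferentiableOn ℝ Y (Ici a))
    (hs : a < s) :
    HasDerivAt (fun t => ‖Y t‖ ^ 2) (2 * inner ℝ (Y s) (derivWithin Y (Ici a) s)) s :=
  (((hY s hs.le).hasDerivWithinAt).hasDerivAt (Ici_mem_nhds hs)).norm_sq

section QuadraticForm

variable {μ : ℝ} (v : EuclideanSpace ℝ (Fin 2))

theorem inner_Mmul (μ : ℝ) :
    inner ℝ v (Mmul μ v) = -v 0 ^ 2 + (1 - μ * (1 - μ)) * (v 0 * v 1) - 2 * v 1 ^ 2 := by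
  simp [Mmul, PiLp.inner_apply, Fin.sum_univ_two]
  ring

theorem EuclideanSpace.norm_sq_fin_two : ‖v‖ ^ 2 = v 0 ^ 2 + v 1 ^ 2 := by
  simp [EuclideanSpace.norm_sq_eq, Fin.sum_univ_two]

variable (hμ : (1 - μ * (1 - μ)) ^ 2 ≤ 1)
include hμ

theorem neg_nine_halves_mul_norm_sq_le_two_inner_Mmul :
    -(9 / 2) * ‖v‖ ^ 2 ≤ 2 * inner ℝ v (Mmul μ v) := by
  rw [inner_Mmul, EuclideanSpace.norm_sq_fin_two]
  set b := 1 - μ * (1 - μ)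
  nlinarith [sq_nonneg (v 1 + 2 * b * v 0), mul_le_mul_of_nonneg_right hμ (sq_nonneg (v 0))]

theorem two_inner_Mmul_le_neg_mul_norm_sq :
    2 * inner ℝ v (Mmul μ v) ≤ -(31 / 20) * ‖v‖ ^ 2 := by
  rw [inner_Mmul, EuclideanSpace.norm_sq_fin_two]
  set b := 1 - μ * (1 - μ)
  nlinarith [sq_nonneg (49 / 20 * v 1 - b * v 0), mul_le_mul_of_nonneg_right hμ (sq_nonneg (v 0))]

theorem two_inner_mem_Icc_of_norm_sub_Mmul_le {w : EuclideanSpace ℝ (Fin 2)} {K : ℝ}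
    (hw : ‖w - Mmul μ v‖ ≤ K * ‖v‖ ^ 2) (hsmall : 40 * K * ‖v‖ ≤ 1) :
    -5 * ‖v‖ ^ 2 ≤ 2 * inner ℝ v w ∧ 2 * inner ℝ v w ≤ -(3 / 2) * ‖v‖ ^ 2 := by
  have hsplit : inner ℝ v w = inner ℝ v (Mmul μ v) + inner ℝ v (w - Mmul μ v) := by
    rw [← inner_add_right, add_sub_cancel]
  have herr : |inner ℝ v (w - Mmul μ v)| ≤ ‖v‖ ^ 2 / 40 :=
    calc |inner ℝ v (w - Mmul μ v)| ≤ ‖v‖ * (K * ‖v‖ ^ 2) :=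
          (abs_real_inner_le_norm _ _).trans (mul_le_mul_of_nonneg_left hw (norm_nonneg v))
      _ = (40 * K * ‖v‖) * ‖v‖ ^ 2 / 40 := by ring
      _ ≤ ‖v‖ ^ 2 / 40 := by gcongr; exact mul_le_of_le_one_left (sq_nonneg _) hsmall
  have hlow := neg_nine_halves_mul_norm_sq_le_two_inner_Mmul v hμ
  have hupp := two_inner_Mmul_le_neg_mul_norm_sq v hμ
  rw [hsplit]
  constructor <;> linarith [abs_le.1 herr, sq_nonneg ‖v‖]

end QuadraticForm

theorem ode_modulus_bounds_general (μ : ℝ) (hμ : 0 < μ) (hμ' : μ < 1 / 2)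
    (Y : ℝ → EuclideanSpace ℝ (Fin 2))
    (hY_C1 : ContDiffOn ℝ 1 Y (Set.Ici 0))
    (hY_ne : ∀ s : ℝ, 0 ≤ s → Y s ≠ 0)
    (hY_lim : Filter.Tendsto (fun s => ‖Y s‖) Filter.atTop (𝓝 0))
    (K : ℝ)
    (hY_ode : ∀ s : ℝ, 0 ≤ s →
      ‖derivWithin Y (Set.Ici 0) s - Mmul μ (Y s)‖ ≤ K * ‖Y s‖ ^ 2) :
    ∃ c : ℝ, 0 < c ∧ c < 1 ∧ ∀ s : ℝ, 0 ≤ s →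
      c * Real.exp (-5 * s) ≤ ‖Y s‖ ^ 2 ∧
      ‖Y s‖ ^ 2 ≤ c⁻¹ * Real.exp (-(3 / 2) * s) := by
  have hb : (1 - μ * (1 - μ)) ^ 2 ≤ 1 := by
    nlinarith [mul_pos hμ (show 0 < 1 - μ by linarith), sq_nonneg (μ - 1 / 2)]
  have hdiff := hY_C1.differentiableOn one_ne_zero
  have hcont : ContinuousOn (fun t => ‖Y t‖ ^ 2) (Ici 0) := hdiff.continuousOn.norm.pow 2
  have hpos : ∀ s, 0 ≤ s → 0 < ‖Y s‖ ^ 2 := fun s hs => by positivity [hY_ne s hs]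
  obtain ⟨T, hT⟩ : ∃ T, ∀ s ≥ T, 0 ≤ s ∧ 40 * K * ‖Y s‖ ≤ 1 :=
    Filter.eventually_atTop.1 <| (Filter.eventually_ge_atTop 0).and <|
      ((hY_lim.const_mul (40 * K)).eventually_lt_const (by simp)).mono fun s hs => hs.le
  have hT_sub : Ici T ⊆ Ici 0 := Ici_subset_Ici.2 (hT T le_rfl).1
  have hT_lt : ∀ s ∈ interior (Ici T), T < s := fun s hs => by rwa [interior_Ici] at hs
  have hderiv := fun s hs => hasDerivAt_norm_sq_of_differentiableOn_Ici hdiff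
    ((hT T le_rfl).1.trans_lt (hT_lt s hs))
  have hbounds := fun s hs => two_inner_mem_Icc_of_norm_sub_Mmul_le (Y s) hb
    (hY_ode s (hT s (hT_lt s hs).le).1) (hT s (hT_lt s hs).le).2
  obtain ⟨m, hm, hlow⟩ := exists_pos_mul_exp_neg_le_of_monotoneOn (l := 5) hcont hpos <|
    monotoneOn_exp_mul_mul_of_le_deriv (convex_Ici T) (hcont.mono hT_sub) hderiv
      fun s hs => (hbounds s hs).1
  obtain ⟨C, hC, hupp⟩ := exists_pos_le_mul_exp_neg_of_antitoneOn (l := 3 / 2) hcont hpos <|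
    antitoneOn_exp_mul_mul_of_deriv_le (convex_Ici T) (hcont.mono hT_sub) hderiv
      fun s hs => (hbounds s hs).2
  set c := min (1 / 2) (min m C⁻¹)
  have hc : 0 < c := by positivity
  have hcm : c ≤ m := (min_le_right _ _).trans (min_le_left _ _)
  have hCc : C ≤ c⁻¹ := le_inv_of_le_inv₀ hc ((min_le_right _ _).trans (min_le_right _ _))
  refine ⟨c, hc, (min_le_left _ _).trans_lt (by norm_num), fun s hs => ⟨?_, ?_⟩⟩
  · exact (mul_le_mul_of_nonneg_right hcm (exp_pos _).le).trans (hlow s hs)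
  · exact (hupp s hs).trans (mul_le_mul_of_nonneg_right hCc (exp_pos _).le)

/-- Two-sided exponential bounds for solutions of the perturbed linear system
`|Y' - M·Y| ≤ K|Y|²` with `M = [[-1, 1], [-μ(1-μ), -2]]`: if `Y` never vanishes and
`|Y(s)| → 0`, then `c·e^(-5s) ≤ |Y(s)|² ≤ c⁻¹·e^(-(3/2)s)` for all `s ≥ 0`. -/
theorem ode_modulus_bounds (μ : ℝ) (hμ : 0 < μ) (hμ' : μ < 1 / 2)
    (Y : ℝ → EuclideanSpace ℝ (Fin 2))
    (hY_C1 : ContDiffOn ℝ 1 Y (Set.Ici 0))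
    (hY_ne : ∀ s : ℝ, 0 ≤ s → Y s ≠ 0)
    (hY_lim : Filter.Tendsto (fun s => ‖Y s‖) Filter.atTop (𝓝 0))
    (K : ℝ) (hK : 0 < K)
    (hY_ode : ∀ s : ℝ, 0 ≤ s →
      ‖derivWithin Y (Set.Ici 0) s - Mmul μ (Y s)‖ ≤ K * ‖Y s‖ ^ 2) :
    ∃ c : ℝ, 0 < c ∧ c < 1 ∧ ∀ s : ℝ, 0 ≤ s →
      c * Real.exp (-5 * s) ≤ ‖Y s‖ ^ 2 ∧
      ‖Y s‖ ^ 2 ≤ c⁻¹ * Real.exp (-(3 / 2) * s) :=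
  ode_modulus_bounds_general μ hμ hμ' Y hY_C1 hY_ne hY_lim K hY_ode
end

section
/- Let μ ∈ (0, 1/2) and let M be the 2×2 matrix with rows (−1, 1) and (−μ(1−μ), −2), with eigenvectors p = (1, −μ) and q = (1, μ−1) for the eigenvalues −1−μ and μ−2 respectively. Suppose Y : [0,∞) → ℝ² is continuously differentiable, Y(s) ≠ 0 for all s ≥ 0, |Y(s)| → 0 as s → ∞, and there is K > 0 with |Y'(s) − M·Y(s)| ≤ K|Y(s)|² for all s ≥ 0. Then there exist a, b ∈ ℝ and C > 0 such that |Y(s) − a·e^{−(1+μ)s}·p − b·e^{(μ−2)s}·q| ≤ C·e^{−2(1+μ)s} for all s ≥ 0. -/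
open scoped Topology

/-- The eigenvector `p = (1, -μ)` of `M` for the eigenvalue `-1-μ`. -/
noncomputable def pvec (μ : ℝ) : EuclideanSpace ℝ (Fin 2) :=
  (EuclideanSpace.equiv (Fin 2) ℝ).symm ![1, -μ]

/-- The eigenvector `q = (1, μ-1)` of `M` for the eigenvalue `μ-2`. -/
noncomputable def qvec (μ : ℝ) : EuclideanSpace ℝ (Fin 2) :=
  (EuclideanSpace.equiv (Fin 2) ℝ).symm ![1, μ - 1]

open Set Filter Real

theorem hasDerivAt_exp_const_mul (c s : ℝ) :
    HasDerivAt (fun t => exp (c * t)) (c * exp (c * s)) s := by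
  simpa [mul_comm] using ((hasDerivAt_id s).const_mul c).exp

theorem exists_abs_sub_le_of_abs_deriv_le_exp {g g' : ℝ → ℝ} {A σ : ℝ} (hσ : 0 < σ)
    (hg : ∀ s ∈ Ici (0 : ℝ), HasDerivWithinAt g (g' s) (Ici 0) s)
    (hg' : ∀ s ∈ Ici (0 : ℝ), |g' s| ≤ A * exp (-σ * s)) :
    ∃ l, ∀ s ∈ Ici (0 : ℝ), |g s - l| ≤ A / σ * exp (-σ * s) := by
  set E : ℝ → ℝ := fun s => A / σ * exp (-σ * s)
  have hA : 0 ≤ A := by simpa using (abs_nonneg _).trans (hg' 0 self_mem_Ici)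
  have hE_nonneg : ∀ s, 0 ≤ E s := fun s => by positivity
  have hE : ∀ s, HasDerivAt E (-(A * exp (-σ * s))) s := fun s =>
    ((hasDerivAt_exp_const_mul (-σ) s).const_mul (A / σ)).congr_deriv (by field_simp)
  have hcont : ContinuousOn g (Ici 0) := fun s hs => (hg s hs).continuousWithinAt
  have hE_cont : ContinuousOn E (Ici 0) := by fun_prop
  have hderiv : ∀ s ∈ interior (Ici (0 : ℝ)), HasDerivWithinAt g (g' s) (interior (Ici 0)) s :=
    fun s hs => (hg s (interior_subset hs)).mono interior_subset
  -- `g + E` decreases and `g - E` increases, so `inf (g + E)` lies within `E s` of `g s`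
  have hupper : AntitoneOn (fun s => g s + E s) (Ici 0) :=
    antitoneOn_of_hasDerivWithinAt_nonpos (convex_Ici 0) (hcont.add hE_cont)
      (fun s hs => (hderiv s hs).add (hE s).hasDerivWithinAt)
      (fun s hs => by linarith [le_abs_self (g' s), hg' s (interior_subset hs)])
  have hlower : MonotoneOn (fun s => g s - E s) (Ici 0) :=
    monotoneOn_of_hasDerivWithinAt_nonneg (convex_Ici 0) (hcont.sub hE_cont)
      (fun s hs => (hderiv s hs).sub (hE s).hasDerivWithinAt)
      (fun s hs => by linarith [neg_abs_le (g' s), hg' s (interior_subset hs)])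
  have hsandwich : ∀ s ∈ Ici (0 : ℝ), ∀ t ∈ Ici (0 : ℝ), g s - E s ≤ g t + E t := by
    intro s hs t ht
    rcases le_total s t with hst | hts
    · linarith [hlower hs ht hst, hE_nonneg t]
    · linarith [hupper ht hs hts, hE_nonneg s]
  refine ⟨sInf ((fun t => g t + E t) '' Ici 0), fun s hs => abs_sub_le_iff.2 ⟨?_, ?_⟩⟩
  · linarith [le_csInf (nonempty_Ici.image _) (forall_mem_image.2 (hsandwich s hs))]
  · linarith [csInf_le ⟨g 0 - E 0, forall_mem_image.2 (hsandwich 0 self_mem_Ici)⟩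
      (mem_image_of_mem (fun t => g t + E t) hs)]

theorem exists_abs_sub_mul_exp_le {x x' : ℝ → ℝ} {κ ν A : ℝ} (hν : ν < κ)
    (hx : ∀ s ∈ Ici (0 : ℝ), HasDerivWithinAt x (x' s) (Ici 0) s)
    (hx' : ∀ s ∈ Ici (0 : ℝ), |x' s - κ * x s| ≤ A * exp (ν * s)) :
    ∃ l, ∀ s ∈ Ici (0 : ℝ), |x s - l * exp (κ * s)| ≤ A / (κ - ν) * exp (ν * s) := by
  -- variation of constants
  have hg : ∀ s ∈ Ici (0 : ℝ), HasDerivWithinAt (fun t => exp (-κ * t) * x t)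
      (exp (-κ * s) * (x' s - κ * x s)) (Ici 0) s := fun s hs =>
    ((hasDerivAt_exp_const_mul (-κ) s).hasDerivWithinAt.mul (hx s hs)).congr_deriv (by ring)
  have hg' : ∀ s ∈ Ici (0 : ℝ), |exp (-κ * s) * (x' s - κ * x s)| ≤ A * exp (-(κ - ν) * s) := by
    intro s hs
    rw [abs_mul, abs_of_pos (exp_pos _), show -(κ - ν) * s = -κ * s + ν * s by ring, exp_add]
    nlinarith [hx' s hs, exp_pos (-κ * s)]
  obtain ⟨l, hl⟩ := exists_abs_sub_le_of_abs_deriv_le_exp (sub_pos.2 hν) hg hg'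
  refine ⟨l, fun s hs => ?_⟩
  have hfactor : x s - l * exp (κ * s) = exp (κ * s) * (exp (-κ * s) * x s - l) := by
    rw [mul_sub, ← mul_assoc, ← exp_add]
    ring_nf
    simp
  calc |x s - l * exp (κ * s)| = exp (κ * s) * |exp (-κ * s) * x s - l| := by
        rw [hfactor, abs_mul, abs_of_pos (exp_pos _)]
    _ ≤ exp (κ * s) * (A / (κ - ν) * exp (-(κ - ν) * s)) := by gcongr; exact hl s hs
    _ = A / (κ - ν) * exp (ν * s) := by
        rw [mul_left_comm, ← exp_add]
        ring_nf

theorem exists_le_mul_exp_of_eventually_deriv_le {φ φ' : ℝ → ℝ} {ν : ℝ}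
    (hφ : ∀ s ∈ Ici (0 : ℝ), HasDerivWithinAt φ (φ' s) (Ici 0) s)
    (hφ' : ∀ᶠ s in atTop, φ' s ≤ ν * φ s) :
    ∃ C, ∀ s ∈ Ici (0 : ℝ), φ s ≤ C * exp (ν * s) := by
  set ψ : ℝ → ℝ := fun s => exp (-ν * s) * φ s
  obtain ⟨s₀, hs₀⟩ := eventually_atTop.1 (hφ'.and (eventually_ge_atTop 0))
  have hψ : ∀ s ∈ Ici (0 : ℝ), HasDerivWithinAt ψ (exp (-ν * s) * (φ' s - ν * φ s)) (Ici 0) s :=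
    fun s hs =>
    ((hasDerivAt_exp_const_mul (-ν) s).hasDerivWithinAt.mul (hφ s hs)).congr_deriv (by ring)
  have hψ_cont : ContinuousOn ψ (Ici 0) := fun s hs => (hψ s hs).continuousWithinAt
  have hsub : Ici s₀ ⊆ Ici 0 := Ici_subset_Ici.2 (hs₀ s₀ le_rfl).2
  have hanti : AntitoneOn ψ (Ici s₀) :=
    antitoneOn_of_hasDerivWithinAt_nonpos (convex_Ici s₀) (hψ_cont.mono hsub)
      (fun s hs => (hψ s (hsub (interior_subset hs))).mono (interior_subset.trans hsub))
      (fun s hs => mul_nonpos_of_nonneg_of_nonpos (exp_pos _).le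
        (sub_nonpos.2 (hs₀ s (interior_subset hs)).1))
  obtain ⟨C, hC⟩ := (isCompact_Icc (a := 0) (b := s₀)).bddAbove_image
    (hψ_cont.mono Icc_subset_Ici_self)
  have hψC : ∀ s ∈ Ici (0 : ℝ), ψ s ≤ C := by
    intro s hs
    rcases le_total s s₀ with hs' | hs'
    · exact hC (mem_image_of_mem ψ ⟨hs, hs'⟩)
    · exact (hanti self_mem_Ici hs' hs').trans
        (hC (mem_image_of_mem ψ ⟨(hs₀ s₀ le_rfl).2, le_rfl⟩))
  refine ⟨C, fun s hs => ?_⟩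
  have hφψ : φ s = exp (ν * s) * ψ s := by
    simp only [ψ, ← mul_assoc, ← exp_add]
    ring_nf
    simp
  rw [hφψ, mul_comm C]
  exact mul_le_mul_of_nonneg_left (hψC s hs) (exp_pos _).le

theorem exists_sq_add_sq_le_mul_exp {α β α' β' : ℝ → ℝ} {κ₁ κ₂ K ν : ℝ}
    (hκ : κ₂ ≤ κ₁) (hν : 2 * κ₁ < ν)
    (hα : ∀ s ∈ Ici (0 : ℝ), HasDerivWithinAt α (α' s) (Ici 0) s)
    (hβ : ∀ s ∈ Ici (0 : ℝ), HasDerivWithinAt β (β' s) (Ici 0) s)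
    (hα' : ∀ s ∈ Ici (0 : ℝ), |α' s - κ₁ * α s| ≤ K * (α s ^ 2 + β s ^ 2))
    (hβ' : ∀ s ∈ Ici (0 : ℝ), |β' s - κ₂ * β s| ≤ K * (α s ^ 2 + β s ^ 2))
    (hα_lim : Tendsto α atTop (𝓝 0)) (hβ_lim : Tendsto β atTop (𝓝 0)) :
    ∃ C, ∀ s ∈ Ici (0 : ℝ), α s ^ 2 + β s ^ 2 ≤ C * exp (ν * s) := by
  refine exists_le_mul_exp_of_eventually_deriv_le
    (φ' := fun s => 2 * α s * α' s + 2 * β s * β' s)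
    (fun s hs => (((hα s hs).pow 2).add ((hβ s hs).pow 2)).congr_deriv (by simp)) ?_
  -- once `(|α| + |β|) K` is small the quadratic forcing cannot beat the linear decay rate `2 κ₁`
  have hsmall : Tendsto (fun s => (|α s| + |β s|) * K) atTop (𝓝 0) := by
    simpa using ((hα_lim.abs.add hβ_lim.abs).mul_const K)
  filter_upwards [hsmall.eventually (gt_mem_nhds (by linarith : (0 : ℝ) < (ν - 2 * κ₁) / 2)),
    eventually_ge_atTop 0] with s hs hs0
  set φ := α s ^ 2 + β s ^ 2
  have hφ : 0 ≤ φ := by positivity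
  have hαe : α s * (α' s - κ₁ * α s) ≤ |α s| * (K * φ) := (le_abs_self _).trans <| by
    rw [abs_mul]; exact mul_le_mul_of_nonneg_left (hα' s hs0) (abs_nonneg _)
  have hβe : β s * (β' s - κ₂ * β s) ≤ |β s| * (K * φ) := (le_abs_self _).trans <| by
    rw [abs_mul]; exact mul_le_mul_of_nonneg_left (hβ' s hs0) (abs_nonneg _)
  have hκβ : κ₂ * β s ^ 2 ≤ κ₁ * β s ^ 2 := mul_le_mul_of_nonneg_right hκ (sq_nonneg _)
  have hforce : (|α s| + |β s|) * K * φ ≤ (ν - 2 * κ₁) / 2 * φ :=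
    mul_le_mul_of_nonneg_right hs.le hφ
  nlinarith

theorem abs_le_mul_exp_of_abs_sub_mul_exp_le {x a C κ ν η s : ℝ} (hκ : κ ≤ η) (hν : ν ≤ η)
    (hs : 0 ≤ s) (h : |x - a * exp (κ * s)| ≤ C * exp (ν * s)) :
    |x| ≤ (|a| + C) * exp (η * s) := by
  have hC : 0 ≤ C := nonneg_of_mul_nonneg_left ((abs_nonneg _).trans h) (exp_pos _)
  have hκη : exp (κ * s) ≤ exp (η * s) := exp_le_exp.2 (by nlinarith)
  have hνη : exp (ν * s) ≤ exp (η * s) := exp_le_exp.2 (by nlinarith)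
  calc |x| ≤ |a * exp (κ * s)| + |x - a * exp (κ * s)| := by
        linarith [abs_sub_abs_le_abs_sub x (a * exp (κ * s))]
    _ ≤ |a| * exp (η * s) + C * exp (η * s) := by
        rw [abs_mul, abs_of_pos (exp_pos _)]
        gcongr
        exact h.trans (by gcongr)
    _ = (|a| + C) * exp (η * s) := by ring

theorem exists_expansion_of_sq_add_sq_le {α β α' β' : ℝ → ℝ} {κ₁ κ₂ K B ν : ℝ}
    (hK : 0 ≤ K) (hν₁ : ν < κ₁) (hν₂ : ν < κ₂)
    (hα : ∀ s ∈ Ici (0 : ℝ), HasDerivWithinAt α (α' s) (Ici 0) s)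
    (hβ : ∀ s ∈ Ici (0 : ℝ), HasDerivWithinAt β (β' s) (Ici 0) s)
    (hα' : ∀ s ∈ Ici (0 : ℝ), |α' s - κ₁ * α s| ≤ K * (α s ^ 2 + β s ^ 2))
    (hβ' : ∀ s ∈ Ici (0 : ℝ), |β' s - κ₂ * β s| ≤ K * (α s ^ 2 + β s ^ 2))
    (hB : ∀ s ∈ Ici (0 : ℝ), α s ^ 2 + β s ^ 2 ≤ B * exp (ν * s)) :
    ∃ a b C, ∀ s ∈ Ici (0 : ℝ),
      |α s - a * exp (κ₁ * s)| ≤ C * exp (ν * s) ∧ |β s - b * exp (κ₂ * s)| ≤ C * exp (ν * s) := by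
  have hforce : ∀ s ∈ Ici (0 : ℝ), K * (α s ^ 2 + β s ^ 2) ≤ K * B * exp (ν * s) := fun s hs => by
    rw [mul_assoc]; exact mul_le_mul_of_nonneg_left (hB s hs) hK
  obtain ⟨a, ha⟩ := exists_abs_sub_mul_exp_le hν₁ hα fun s hs => (hα' s hs).trans (hforce s hs)
  obtain ⟨b, hb⟩ := exists_abs_sub_mul_exp_le hν₂ hβ fun s hs => (hβ' s hs).trans (hforce s hs)
  refine ⟨a, b, max (K * B / (κ₁ - ν)) (K * B / (κ₂ - ν)), fun s hs => ⟨?_, ?_⟩⟩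
  · exact (ha s hs).trans (mul_le_mul_of_nonneg_right (le_max_left _ _) (exp_pos _).le)
  · exact (hb s hs).trans (mul_le_mul_of_nonneg_right (le_max_right _ _) (exp_pos _).le)

theorem exists_expansion_of_diagonal_system {α β α' β' : ℝ → ℝ} {κ₁ κ₂ K : ℝ}
    (hK : 0 ≤ K) (hκ : κ₂ ≤ κ₁) (hgap : 2 * κ₁ < κ₂)
    (hα : ∀ s ∈ Ici (0 : ℝ), HasDerivWithinAt α (α' s) (Ici 0) s)
    (hβ : ∀ s ∈ Ici (0 : ℝ), HasDerivWithinAt β (β' s) (Ici 0) s)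
    (hα' : ∀ s ∈ Ici (0 : ℝ), |α' s - κ₁ * α s| ≤ K * (α s ^ 2 + β s ^ 2))
    (hβ' : ∀ s ∈ Ici (0 : ℝ), |β' s - κ₂ * β s| ≤ K * (α s ^ 2 + β s ^ 2))
    (hα_lim : Tendsto α atTop (𝓝 0)) (hβ_lim : Tendsto β atTop (𝓝 0)) :
    ∃ a b C, ∀ s ∈ Ici (0 : ℝ),
      |α s - a * exp (κ₁ * s)| ≤ C * exp (2 * κ₁ * s) ∧
        |β s - b * exp (κ₂ * s)| ≤ C * exp (2 * κ₁ * s) := by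
  obtain ⟨ν, hν₁, hν₂⟩ := exists_between hgap
  obtain ⟨B, hB⟩ := exists_sq_add_sq_le_mul_exp hκ hν₁ hα hβ hα' hβ' hα_lim hβ_lim
  obtain ⟨a₀, b₀, C₀, h₀⟩ := exists_expansion_of_sq_add_sq_le hK (hν₂.trans_le hκ) hν₂
    hα hβ hα' hβ' hB
  have hB' : ∀ s ∈ Ici (0 : ℝ),
      α s ^ 2 + β s ^ 2 ≤ ((|a₀| + C₀) ^ 2 + (|b₀| + C₀) ^ 2) * exp (2 * κ₁ * s) := by
    intro s hs
    have hαs := abs_le_mul_exp_of_abs_sub_mul_exp_le le_rfl (by linarith) hs (h₀ s hs).1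
    have hβs := abs_le_mul_exp_of_abs_sub_mul_exp_le hκ (by linarith) hs (h₀ s hs).2
    have hsq : exp (κ₁ * s) ^ 2 = exp (2 * κ₁ * s) := by rw [← exp_nat_mul]; ring_nf
    rw [← sq_abs (α s), ← sq_abs (β s), add_mul, ← hsq, ← mul_pow, ← mul_pow]
    gcongr
  exact exists_expansion_of_sq_add_sq_le hK (by linarith) hgap hα hβ hα' hβ' hB'

theorem norm_smul_add_smul_sq_le {E : Type*} [SeminormedAddCommGroup E] [NormedSpace ℝ E]
    (a b : ℝ) (p q : E) : ‖a • p + b • q‖ ^ 2 ≤ (‖p‖ ^ 2 + ‖q‖ ^ 2) * (a ^ 2 + b ^ 2) := by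
  have h := norm_add_le (a • p) (b • q)
  rw [norm_smul, norm_smul, Real.norm_eq_abs, Real.norm_eq_abs] at h
  calc ‖a • p + b • q‖ ^ 2 ≤ (|a| * ‖p‖ + |b| * ‖q‖) ^ 2 := by gcongr
    _ ≤ (‖p‖ ^ 2 + ‖q‖ ^ 2) * (a ^ 2 + b ^ 2) := by
        rw [← sq_abs a, ← sq_abs b]
        nlinarith [sq_nonneg (|a| * ‖q‖ - |b| * ‖p‖)]

theorem norm_smul_add_smul_le_mul {E : Type*} [SeminormedAddCommGroup E] [NormedSpace ℝ E]
    {a b C : ℝ} (p q : E) (ha : |a| ≤ C) (hb : |b| ≤ C) : ‖a • p + b • q‖ ≤ C * (‖p‖ + ‖q‖) :=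
  calc ‖a • p + b • q‖ ≤ |a| * ‖p‖ + |b| * ‖q‖ := by
        rw [← Real.norm_eq_abs, ← Real.norm_eq_abs, ← norm_smul, ← norm_smul]
        exact norm_add_le _ _
    _ ≤ C * (‖p‖ + ‖q‖) := by rw [mul_add]; gcongr

-- Coordinates in the eigenbasis `(p, q)`: the rows of the inverse of the matrix with columns
-- `p`, `q`, i.e. left eigenvectors of `M`.
noncomputable def pCoord (μ : ℝ) : EuclideanSpace ℝ (Fin 2) →L[ℝ] ℝ :=
  (1 - 2 * μ)⁻¹ • ((1 - μ) • EuclideanSpace.proj 0 + EuclideanSpace.proj 1)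

noncomputable def qCoord (μ : ℝ) : EuclideanSpace ℝ (Fin 2) →L[ℝ] ℝ :=
  -(1 - 2 * μ)⁻¹ • (μ • EuclideanSpace.proj 0 + EuclideanSpace.proj 1)

theorem pCoord_apply (μ : ℝ) (v : EuclideanSpace ℝ (Fin 2)) :
    pCoord μ v = ((1 - μ) * v 0 + v 1) / (1 - 2 * μ) := by
  simp [pCoord]; ring

theorem qCoord_apply (μ : ℝ) (v : EuclideanSpace ℝ (Fin 2)) :
    qCoord μ v = -(μ * v 0 + v 1) / (1 - 2 * μ) := by
  simp [qCoord]; ring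

theorem pCoord_Mmul (μ : ℝ) (v : EuclideanSpace ℝ (Fin 2)) :
    pCoord μ (Mmul μ v) = -(1 + μ) * pCoord μ v := by
  simp [pCoord_apply, Mmul]; ring

theorem qCoord_Mmul (μ : ℝ) (v : EuclideanSpace ℝ (Fin 2)) :
    qCoord μ (Mmul μ v) = (μ - 2) * qCoord μ v := by
  simp [qCoord_apply, Mmul]; ring

theorem pCoord_smul_pvec_add_qCoord_smul_qvec {μ : ℝ} (hμ : 1 - 2 * μ ≠ 0)
    (v : EuclideanSpace ℝ (Fin 2)) : pCoord μ v • pvec μ + qCoord μ v • qvec μ = v := by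
  ext i
  fin_cases i <;> simp [pCoord_apply, qCoord_apply, pvec, qvec]
  · linear_combination v 0 * mul_inv_cancel₀ hμ
  · linear_combination v 1 * mul_inv_cancel₀ hμ

theorem abs_apply_sub_mul_apply_le_of_norm_sub_Mmul_le {μ κ K N : ℝ}
    {L : EuclideanSpace ℝ (Fin 2) →L[ℝ] ℝ} {v w : EuclideanSpace ℝ (Fin 2)} (hμ : 1 - 2 * μ ≠ 0)
    (hK : 0 ≤ K) (hL : ∀ v, L (Mmul μ v) = κ * L v) (hLN : ‖L‖ ≤ N)
    (h : ‖w - Mmul μ v‖ ≤ K * ‖v‖ ^ 2) :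
    |L w - κ * L v| ≤
      N * K * (‖pvec μ‖ ^ 2 + ‖qvec μ‖ ^ 2) * (pCoord μ v ^ 2 + qCoord μ v ^ 2) := by
  have hv : ‖v‖ ^ 2 ≤ (‖pvec μ‖ ^ 2 + ‖qvec μ‖ ^ 2) * (pCoord μ v ^ 2 + qCoord μ v ^ 2) := by
    simpa only [pCoord_smul_pvec_add_qCoord_smul_qvec hμ] using
      norm_smul_add_smul_sq_le (pCoord μ v) (qCoord μ v) (pvec μ) (qvec μ)
  calc |L w - κ * L v| = ‖L (w - Mmul μ v)‖ := by rw [map_sub, hL, Real.norm_eq_abs]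
    _ ≤ ‖L‖ * ‖w - Mmul μ v‖ := L.le_opNorm _
    _ ≤ N * (K * ((‖pvec μ‖ ^ 2 + ‖qvec μ‖ ^ 2) * (pCoord μ v ^ 2 + qCoord μ v ^ 2))) :=
        mul_le_mul hLN (h.trans (by gcongr)) (norm_nonneg _) ((norm_nonneg L).trans hLN)
    _ = _ := by ring

theorem ode_asymptotic_expansion_general (μ : ℝ) (hμ : 0 < μ) (hμ' : μ < 1 / 2)
    (Y : ℝ → EuclideanSpace ℝ (Fin 2))
    (hY_C1 : ContDiffOn ℝ 1 Y (Set.Ici 0))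
    (hY_lim : Filter.Tendsto (fun s => ‖Y s‖) Filter.atTop (𝓝 0))
    (K : ℝ) (hK : 0 < K)
    (hY_ode : ∀ s : ℝ, 0 ≤ s →
      ‖derivWithin Y (Set.Ici 0) s - Mmul μ (Y s)‖ ≤ K * ‖Y s‖ ^ 2) :
    ∃ (a b C : ℝ), 0 < C ∧ ∀ s : ℝ, 0 ≤ s →
      ‖Y s - Real.exp (-(1 + μ) * s) • (a • pvec μ) -
          Real.exp ((μ - 2) * s) • (b • qvec μ)‖ ≤
        C * Real.exp (-2 * (1 + μ) * s) := by
  have hμ₂ : 1 - 2 * μ ≠ 0 := by linarith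
  have hY : ∀ s ∈ Ici (0 : ℝ), HasDerivWithinAt Y (derivWithin Y (Ici 0) s) (Ici 0) s :=
    fun s hs => (hY_C1.differentiableOn one_ne_zero s hs).hasDerivWithinAt
  have hY₀ : Tendsto Y atTop (𝓝 0) := tendsto_zero_iff_norm_tendsto_zero.2 hY_lim
  obtain ⟨a, b, C, hC⟩ := exists_expansion_of_diagonal_system
    (α := fun s => pCoord μ (Y s)) (β := fun s => qCoord μ (Y s))
    (K := max ‖pCoord μ‖ ‖qCoord μ‖ * K * (‖pvec μ‖ ^ 2 + ‖qvec μ‖ ^ 2))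
    (by positivity) (by linarith : μ - 2 ≤ -(1 + μ)) (by linarith : 2 * -(1 + μ) < μ - 2)
    (fun s hs => (pCoord μ).hasFDerivAt.comp_hasDerivWithinAt s (hY s hs))
    (fun s hs => (qCoord μ).hasFDerivAt.comp_hasDerivWithinAt s (hY s hs))
    (fun s hs => abs_apply_sub_mul_apply_le_of_norm_sub_Mmul_le hμ₂ hK.le (pCoord_Mmul μ)
      (le_max_left _ _) (hY_ode s hs))
    (fun s hs => abs_apply_sub_mul_apply_le_of_norm_sub_Mmul_le hμ₂ hK.le (qCoord_Mmul μ)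
      (le_max_right _ _) (hY_ode s hs))
    (by simpa [Function.comp_def] using ((pCoord μ).continuous.tendsto 0).comp hY₀)
    (by simpa [Function.comp_def] using ((qCoord μ).continuous.tendsto 0).comp hY₀)
  refine ⟨a, b, max (C * (‖pvec μ‖ + ‖qvec μ‖)) 1, lt_max_of_lt_right one_pos, fun s hs => ?_⟩
  obtain ⟨hα, hβ⟩ := hC s hs
  have hdecomp : Y s - exp (-(1 + μ) * s) • (a • pvec μ) - exp ((μ - 2) * s) • (b • qvec μ) =
      (pCoord μ (Y s) - a * exp (-(1 + μ) * s)) • pvec μ +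
        (qCoord μ (Y s) - b * exp ((μ - 2) * s)) • qvec μ := by
    conv_lhs => rw [← pCoord_smul_pvec_add_qCoord_smul_qvec hμ₂ (Y s)]
    module
  rw [hdecomp, show -2 * (1 + μ) * s = 2 * -(1 + μ) * s by ring]
  calc _ ≤ C * exp (2 * -(1 + μ) * s) * (‖pvec μ‖ + ‖qvec μ‖) := norm_smul_add_smul_le_mul _ _ hα hβ
    _ ≤ _ := by rw [mul_right_comm]; gcongr; exact le_max_left _ _

/-- Asymptotic expansion of solutions of the perturbed linear system
`|Y' - M·Y| ≤ K|Y|²`: there exist `a, b ∈ ℝ` and `C > 0` with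
`|Y(s) - a·e^(-(1+μ)s)·p - b·e^((μ-2)s)·q| ≤ C·e^(-2(1+μ)s)` for all `s ≥ 0`. -/
theorem ode_asymptotic_expansion (μ : ℝ) (hμ : 0 < μ) (hμ' : μ < 1 / 2)
    (Y : ℝ → EuclideanSpace ℝ (Fin 2))
    (hY_C1 : ContDiffOn ℝ 1 Y (Set.Ici 0))
    (hY_ne : ∀ s : ℝ, 0 ≤ s → Y s ≠ 0)
    (hY_lim : Filter.Tendsto (fun s => ‖Y s‖) Filter.atTop (𝓝 0))
    (K : ℝ) (hK : 0 < K)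
    (hY_ode : ∀ s : ℝ, 0 ≤ s →
      ‖derivWithin Y (Set.Ici 0) s - Mmul μ (Y s)‖ ≤ K * ‖Y s‖ ^ 2) :
    ∃ (a b C : ℝ), 0 < C ∧ ∀ s : ℝ, 0 ≤ s →
      ‖Y s - Real.exp (-(1 + μ) * s) • (a • pvec μ) -
          Real.exp ((μ - 2) * s) • (b • qvec μ)‖ ≤
        C * Real.exp (-2 * (1 + μ) * s) :=
  ode_asymptotic_expansion_general μ hμ hμ' Y hY_C1 hY_lim K hK hY_ode
end

section
/- Let φ : ℝ → ℝ be smooth and let σ : (0,∞) → (0,∞) be a smooth solution of G(σ)(τ) = σ''(τ) + P(σ'(τ))/τ + Q(σ'(τ))/σ(τ) = 0 on (0,∞), where P(s) = φ'(s)/φ''(s), Q(s) = (sφ'(s) − φ(s))/φ''(s), and assume φ''(σ'(τ)) ≠ 0 for all τ > 0. Then the function f₀(τ) := σ(τ) − τ·σ'(τ) satisfies the linearized equation L f₀ = 0 on (0,∞), where L f = f'' + (1/τ + σ'/σ + σ''·φ'''(σ')/φ''(σ'))·f' + ((φ(σ') − σ'·φ'(σ'))/(σ²·φ''(σ')))·f.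 -/
open scoped Topology ContDiff

/-- The radial anisotropic mean curvature operator
`G(σ)(τ) = σ''(τ) + P(σ'(τ))/τ + Q(σ'(τ))/σ(τ)`, where `P = φ'/φ''` and
`Q = (sφ' - φ)/φ''`. -/
noncomputable def Gop (φ σ : ℝ → ℝ) (τ : ℝ) : ℝ :=
  deriv (deriv σ) τ +
    (deriv φ (deriv σ τ) / deriv (deriv φ) (deriv σ τ)) / τ +
    ((deriv σ τ * deriv φ (deriv σ τ) - φ (deriv σ τ)) / deriv (deriv φ) (deriv σ τ)) / σ τ

/-- The linearization of `G` at a solution `σ`: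
`L f = f'' + (1/τ + σ'/σ + σ''φ'''(σ')/φ''(σ'))·f' + ((φ(σ') - σ'φ'(σ'))/(σ²φ''(σ')))·f`. -/
noncomputable def Lop (φ σ f : ℝ → ℝ) (τ : ℝ) : ℝ :=
  deriv (deriv f) τ +
    (1 / τ + deriv σ τ / σ τ +
      deriv (deriv σ) τ * deriv (deriv (deriv φ)) (deriv σ τ) / deriv (deriv φ) (deriv σ τ)) *
      deriv f τ +
    ((φ (deriv σ τ) - deriv σ τ * deriv φ (deriv σ τ)) /
      (σ τ ^ 2 * deriv (deriv φ) (deriv σ τ))) * f τ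

/-- The function `f₀(τ) = σ(τ) - τ·σ'(τ)`, arising from the Lipschitz-rescaling
invariance of `G(σ) = 0`, solves the linearized equation `L f₀ = 0` on `(0, ∞)`. -/
theorem rescaling_jacobi_field (φ : ℝ → ℝ) (hφ : ContDiff ℝ (⊤ : ℕ∞) φ)
    (σ : ℝ → ℝ) (hσ_smooth : ContDiffOn ℝ (⊤ : ℕ∞) σ (Set.Ioi 0))
    (hσ_pos : ∀ τ > (0 : ℝ), 0 < σ τ)
    (hφ''_ne : ∀ τ > (0 : ℝ), deriv (deriv φ) (deriv σ τ) ≠ 0)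
    (hσ_ode : ∀ τ > (0 : ℝ), Gop φ σ τ = 0) :
    ∀ τ > (0 : ℝ), Lop φ σ (fun t => σ t - t * deriv σ t) τ = 0 := by
  intro τ hτ
  have hO : IsOpen (Set.Ioi (0:ℝ)) := isOpen_Ioi
  have hmem : Set.Ioi (0:ℝ) ∈ 𝓝 τ := hO.mem_nhds hτ
  -- smoothness of σ and its derivatives on (0,∞)
  have hσ0 : ContDiffOn ℝ ∞ σ (Set.Ioi 0) := hσ_smooth.of_le (by simp)
  have hσ1 : ContDiffOn ℝ ∞ (deriv σ) (Set.Ioi 0) :=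
    hσ0.deriv_of_isOpen hO (by norm_num)
  have hσ2 : ContDiffOn ℝ ∞ (deriv (deriv σ)) (Set.Ioi 0) :=
    hσ1.deriv_of_isOpen hO (by norm_num)
  have hdσ : ∀ t ∈ Set.Ioi (0:ℝ), HasDerivAt σ (deriv σ t) t := fun t ht =>
    ((hσ0.differentiableOn (by norm_num)).differentiableAt (hO.mem_nhds ht)).hasDerivAt
  have hdσ1 : ∀ t ∈ Set.Ioi (0:ℝ), HasDerivAt (deriv σ) (deriv (deriv σ) t) t := fun t ht =>
    ((hσ1.differentiableOn (by norm_num)).differentiableAt (hO.mem_nhds ht)).hasDerivAt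
  have hdσ2 : ∀ t ∈ Set.Ioi (0:ℝ),
      HasDerivAt (deriv (deriv σ)) (deriv (deriv (deriv σ)) t) t := fun t ht =>
    ((hσ2.differentiableOn (by norm_num)).differentiableAt (hO.mem_nhds ht)).hasDerivAt
  -- smoothness of φ and its derivatives
  have hφ0 : ContDiff ℝ ∞ φ := hφ.of_le (by simp)
  have hφ1 : ContDiff ℝ ∞ (deriv φ) := (contDiff_infty_iff_deriv.mp hφ0).2
  have hφ2 : ContDiff ℝ ∞ (deriv (deriv φ)) := (contDiff_infty_iff_deriv.mp hφ1).2
  have hdφ : ∀ x : ℝ, HasDerivAt φ (deriv φ x) x := fun x =>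
    (hφ0.differentiable (by norm_num) x).hasDerivAt
  have hdφ1 : ∀ x : ℝ, HasDerivAt (deriv φ) (deriv (deriv φ) x) x := fun x =>
    (hφ1.differentiable (by norm_num) x).hasDerivAt
  have hdφ2 : ∀ x : ℝ, HasDerivAt (deriv (deriv φ)) (deriv (deriv (deriv φ)) x) x := fun x =>
    (hφ2.differentiable (by norm_num) x).hasDerivAt
  -- the cleared-denominator ODE
  set E : ℝ → ℝ := fun t =>
    deriv (deriv σ) t * deriv (deriv φ) (deriv σ t) * t * σ t +
      deriv φ (deriv σ t) * σ t +
      (deriv σ t * deriv φ (deriv σ t) - φ (deriv σ t)) * t with hEdef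
  have hE0 : ∀ t ∈ Set.Ioi (0:ℝ), E t = 0 := by
    intro t ht
    have h := hσ_ode t ht
    rw [Gop] at h
    have h2 := hφ''_ne t ht
    have ht0 : (t:ℝ) ≠ 0 := ne_of_gt ht
    have hs : σ t ≠ 0 := (hσ_pos t ht).ne'
    field_simp at h
    have hh : deriv (deriv φ) (deriv σ t) * E t = 0 := by
      rw [hEdef]
      linear_combination (deriv (deriv φ) (deriv σ t)) * h
    exact (mul_eq_zero.mp hh).resolve_left h2
  -- derivative of E at τ
  have hτ' : τ ∈ Set.Ioi (0:ℝ) := hτ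
  have h1 : HasDerivAt σ (deriv σ τ) τ := hdσ τ hτ'
  have h2 : HasDerivAt (deriv σ) (deriv (deriv σ) τ) τ := hdσ1 τ hτ'
  have h3 : HasDerivAt (deriv (deriv σ)) (deriv (deriv (deriv σ)) τ) τ := hdσ2 τ hτ'
  have hp1 : HasDerivAt (fun t => φ (deriv σ t)) (deriv φ (deriv σ τ) * deriv (deriv σ) τ) τ :=
    (hdφ (deriv σ τ)).comp τ h2
  have hp2 : HasDerivAt (fun t => deriv φ (deriv σ t))
      (deriv (deriv φ) (deriv σ τ) * deriv (deriv σ) τ) τ :=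
    (hdφ1 (deriv σ τ)).comp τ h2
  have hp3 : HasDerivAt (fun t => deriv (deriv φ) (deriv σ t))
      (deriv (deriv (deriv φ)) (deriv σ τ) * deriv (deriv σ) τ) τ :=
    (hdφ2 (deriv σ τ)).comp τ h2
  have hd : HasDerivAt E
      (deriv (deriv (deriv σ)) τ * deriv (deriv φ) (deriv σ τ) * τ * σ τ +
        deriv (deriv σ) τ ^ 2 * deriv (deriv (deriv φ)) (deriv σ τ) * τ * σ τ +
        2 * deriv (deriv σ) τ * deriv (deriv φ) (deriv σ τ) * σ τ +
        2 * deriv (deriv σ) τ * deriv (deriv φ) (deriv σ τ) * τ * deriv σ τ +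
        2 * deriv σ τ * deriv φ (deriv σ τ) - φ (deriv σ τ)) τ := by
    have h := ((((h3.mul hp3).mul (hasDerivAt_id τ)).mul h1).add (hp2.mul h1)).add
      (((h2.mul hp2).sub hp1).mul (hasDerivAt_id τ))
    simp only [id_eq] at h
    rw [hEdef]
    refine h.congr_deriv ?_
    simp only [Pi.mul_apply, Pi.sub_apply, id_eq]
    ring
  have hEeq : E =ᶠ[𝓝 τ] fun _ => (0:ℝ) := Filter.eventuallyEq_of_mem hmem hE0
  have hD : deriv (deriv (deriv σ)) τ * deriv (deriv φ) (deriv σ τ) * τ * σ τ +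
        deriv (deriv σ) τ ^ 2 * deriv (deriv (deriv φ)) (deriv σ τ) * τ * σ τ +
        2 * deriv (deriv σ) τ * deriv (deriv φ) (deriv σ τ) * σ τ +
        2 * deriv (deriv σ) τ * deriv (deriv φ) (deriv σ τ) * τ * deriv σ τ +
        2 * deriv σ τ * deriv φ (deriv σ τ) - φ (deriv σ τ) = 0 := by
    rw [← hd.deriv, hEeq.deriv_eq, deriv_const]
  -- derivatives of f₀
  have hf' : ∀ t ∈ Set.Ioi (0:ℝ),
      HasDerivAt (fun u => σ u - u * deriv σ u) (-(t * deriv (deriv σ) t)) t := by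
    intro t ht
    have h := (hdσ t ht).sub ((hasDerivAt_id t).mul (hdσ1 t ht))
    simp only [id_eq] at h
    refine h.congr_deriv ?_
    ring
  have hf'eq : Set.EqOn (deriv fun u => σ u - u * deriv σ u)
      (fun t => -(t * deriv (deriv σ) t)) (Set.Ioi 0) := fun t ht => (hf' t ht).deriv
  have hfev : (deriv fun u => σ u - u * deriv σ u) =ᶠ[𝓝 τ]
      fun t => -(t * deriv (deriv σ) t) := Filter.eventuallyEq_of_mem hmem hf'eq
  have h2nd : deriv (deriv fun u => σ u - u * deriv σ u) τ =
      -(deriv (deriv σ) τ + τ * deriv (deriv (deriv σ)) τ) := by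
    rw [hfev.deriv_eq]
    have h := ((hasDerivAt_id τ).mul h3).neg
    simp only [id_eq] at h
    have h' : HasDerivAt (fun t => -(t * deriv (deriv σ) t))
        (-(deriv (deriv σ) τ + τ * deriv (deriv (deriv σ)) τ)) τ := by
      refine h.congr_deriv ?_
      ring
    exact h'.deriv
  have hf1 : deriv (fun u => σ u - u * deriv σ u) τ = -(τ * deriv (deriv σ) τ) :=
    (hf' τ hτ').deriv
  have hEτ : E τ = 0 := hE0 τ hτ'
  rw [hEdef] at hEτ
  have ht0 : τ ≠ 0 := ne_of_gt hτ
  have hs0 : σ τ ≠ 0 := (hσ_pos τ hτ).ne'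
  have hp2ne := hφ''_ne τ hτ
  rw [Lop, h2nd, hf1]
  field_simp
  linear_combination (-(σ τ)) * hD +
    (deriv σ τ) * hEτ
end

section
/- Let p : [0,∞) → ℝ be continuous with p > 0 on (0,∞) and smooth on (0,∞), such that p(t)/t extends to a positive continuous function on [0,∞). Let f₀ : [0,∞) → (0,∞) be C¹ on [0,∞), smooth on (0,∞), and satisfy f₀'' + (log p)'·f₀' + q·f₀ = 0 on (0,∞) for a continuous function q. Let g : [0,∞) → ℝ be continuous. Then the function f(τ) := f₀(τ)·∫₀^τ (f₀(t)²·p(t))^{−1}·(∫₀^t g(s)·p(s)·f₀(s) ds) dt is well defined, satisfies f'' + (log p)'·f' + q·f = g on (0,∞), and satisfies f(τ) → 0 and f'(τ) → 0 as τ → 0⁺. -/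
open scoped Topology
open MeasureTheory intervalIntegral

/-- Variation of parameters for `L f = f'' + (log p)' f' + q f`: given a positive
solution `f₀` of `L f₀ = 0` and a continuous right-hand side `g`, the double-integral
formula `f(τ) = f₀(τ)·∫₀^τ (f₀(t)²p(t))⁻¹ ∫₀^t g(s)p(s)f₀(s) ds dt` is well
defined (the integrands are integrable), solves `L f = g` on `(0, ∞)`, and satisfies
`f(τ) → 0`, `f'(τ) → 0` as `τ → 0⁺`. -/
theorem variation_of_parameters
    (p f₀ q g : ℝ → ℝ)
    (hp_cont : ContinuousOn p (Set.Ici 0))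
    (hp_pos : ∀ t > (0 : ℝ), 0 < p t)
    (hp_smooth : ContDiffOn ℝ (⊤ : ℕ∞) p (Set.Ioi 0))
    -- `p(t)/t` extends to a positive continuous function on `[0, ∞)`
    (hp_ext : ∃ p' : ℝ → ℝ, ContinuousOn p' (Set.Ici 0) ∧
      (∀ t ≥ (0 : ℝ), 0 < p' t) ∧ (∀ t > (0 : ℝ), p' t = p t / t))
    (hf₀_C1 : ContDiffOn ℝ 1 f₀ (Set.Ici 0))
    (hf₀_smooth : ContDiffOn ℝ (⊤ : ℕ∞) f₀ (Set.Ioi 0))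
    (hf₀_pos : ∀ t ≥ (0 : ℝ), 0 < f₀ t)
    (hq_cont : ContinuousOn q (Set.Ici 0))
    (hf₀_ode : ∀ τ > (0 : ℝ),
      deriv (deriv f₀) τ + deriv (fun t => Real.log (p t)) τ * deriv f₀ τ + q τ * f₀ τ = 0)
    (hg_cont : ContinuousOn g (Set.Ici 0)) :
    -- the solution given by the variation-of-parameters formula
    let f : ℝ → ℝ := fun τ => f₀ τ *
      ∫ t in (0 : ℝ)..τ, (f₀ t ^ 2 * p t)⁻¹ * ∫ s in (0 : ℝ)..t, g s * p s * f₀ s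
    -- well-definedness: the inner and outer integrands are interval integrable
    (∀ τ > (0 : ℝ), IntervalIntegrable (fun s => g s * p s * f₀ s) volume 0 τ) ∧
    (∀ τ > (0 : ℝ), IntervalIntegrable
      (fun t => (f₀ t ^ 2 * p t)⁻¹ * ∫ s in (0 : ℝ)..t, g s * p s * f₀ s) volume 0 τ) ∧
    -- `f` solves `L f = g` on `(0, ∞)`
    (∀ τ > (0 : ℝ),
      deriv (deriv f) τ + deriv (fun t => Real.log (p t)) τ * deriv f τ + q τ * f τ = g τ) ∧
    -- `f(τ) → 0` and `f'(τ) → 0` as `τ → 0⁺`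
    Filter.Tendsto f (𝓝[>] 0) (𝓝 0) ∧
    Filter.Tendsto (deriv f) (𝓝[>] 0) (𝓝 0) := by
  obtain ⟨P, hP_cont, hP_pos, hP_eq⟩ := hp_ext
  intro f
  have hf₀ne : ∀ t > (0:ℝ), f₀ t ≠ 0 := fun t ht => (hf₀_pos t ht.le).ne'
  have hpne : ∀ t > (0:ℝ), p t ≠ 0 := fun t ht => (hp_pos t ht).ne'
  have hA : ∀ t > (0:ℝ), f₀ t ^ 2 * p t ≠ 0 :=
    fun t ht => mul_ne_zero (pow_ne_zero _ (hf₀ne t ht)) (hpne t ht)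
  have hpP : ∀ t > (0:ℝ), p t = P t * t := by
    intro t ht
    rw [hP_eq t ht, div_mul_cancel₀ _ ht.ne']
  -- p 0 = 0
  have hp0 : p 0 = 0 := by
    have h1 : Filter.Tendsto p (𝓝[>] (0:ℝ)) (𝓝 (p 0)) :=
      ((hp_cont 0 Set.self_mem_Ici).mono Set.Ioi_subset_Ici_self)
    have h2 : Filter.Tendsto p (𝓝[>] (0:ℝ)) (𝓝 0) := by
      have h3 : Filter.Tendsto (fun t => P t * t) (𝓝[>] (0:ℝ)) (𝓝 (P 0 * 0)) :=
        ((hP_cont 0 Set.self_mem_Ici).mono Set.Ioi_subset_Ici_self).tendsto.mul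
          (tendsto_nhdsWithin_of_tendsto_nhds Filter.tendsto_id)
      rw [mul_zero] at h3
      exact h3.congr' (by filter_upwards [eventually_mem_nhdsWithin] with t ht
        using (hpP t ht).symm)
    exact tendsto_nhds_unique h1 h2
  set h : ℝ → ℝ := fun s => g s * p s * f₀ s with hh_def
  have hh_cont : ContinuousOn h (Set.Ici 0) := (hg_cont.mul hp_cont).mul hf₀_C1.continuousOn
  have hh0 : h 0 = 0 := by simp [hh_def, hp0]
  -- part 1
  have part1 : ∀ τ > (0:ℝ), IntervalIntegrable h volume 0 τ := by
    intro τ hτ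
    apply ContinuousOn.intervalIntegrable
    apply hh_cont.mono
    rw [Set.uIcc_of_le hτ.le]
    exact fun x hx => hx.1
  set G : ℝ → ℝ := fun t => ∫ s in (0:ℝ)..t, h s with hG_def
  have hmem : ∀ t > (0:ℝ), Set.Ioi (0:ℝ) ∈ 𝓝 t := fun t ht => isOpen_Ioi.mem_nhds ht
  have hh_contAt : ∀ t > (0:ℝ), ContinuousAt h t :=
    fun t ht => hh_cont.continuousAt (Ici_mem_nhds ht)
  have hh_contIoi : ContinuousOn h (Set.Ioi 0) := hh_cont.mono Set.Ioi_subset_Ici_self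
  have hG_deriv : ∀ t > (0:ℝ), HasDerivAt G (h t) t := fun t ht =>
    intervalIntegral.integral_hasDerivAt_right (part1 t ht)
      (hh_contIoi.stronglyMeasurableAtFilter isOpen_Ioi t ht) (hh_contAt t ht)
  set w : ℝ → ℝ := fun t => (f₀ t ^ 2 * p t)⁻¹ * G t with hw_def
  have hf₀_contAt : ∀ t > (0:ℝ), ContinuousAt f₀ t :=
    fun t ht => hf₀_C1.continuousOn.continuousAt (Ici_mem_nhds ht)
  have hp_contAt : ∀ t > (0:ℝ), ContinuousAt p t :=
    fun t ht => hp_cont.continuousAt (Ici_mem_nhds ht)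
  have hw_contAt : ∀ t > (0:ℝ), ContinuousAt w t := by
    intro t ht
    exact ((((hf₀_contAt t ht).pow 2).mul (hp_contAt t ht)).inv₀ (hA t ht)).mul
      (hG_deriv t ht).continuousAt
  have hw_contIoi : ContinuousOn w (Set.Ioi 0) :=
    fun t ht => (hw_contAt t ht).continuousWithinAt
  -- bound on w
  have hbound : ∀ τ₀ > (0:ℝ), ∃ C ≥ (0:ℝ), ∀ t ∈ Set.Ioc (0:ℝ) τ₀, |w t| ≤ C := by
    intro τ₀ hτ₀
    obtain ⟨M, hM⟩ := (isCompact_Icc : IsCompact (Set.Icc (0:ℝ) τ₀)).exists_bound_of_continuousOn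
      (hh_cont.mono Set.Icc_subset_Ici_self)
    have hM0 : 0 ≤ M := le_trans (norm_nonneg _) (hM 0 ⟨le_refl _, hτ₀.le⟩)
    have hcont2 : ContinuousOn (fun t => f₀ t ^ 2 * P t) (Set.Icc 0 τ₀) :=
      ((hf₀_C1.continuousOn.mono Set.Icc_subset_Ici_self).pow 2).mul
        (hP_cont.mono Set.Icc_subset_Ici_self)
    obtain ⟨t₀, ht₀mem, ht₀min⟩ := isCompact_Icc.exists_isMinOn (Set.nonempty_Icc.2 hτ₀.le) hcont2
    set c := f₀ t₀ ^ 2 * P t₀ with hc_def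
    have hc : 0 < c := mul_pos (pow_pos (hf₀_pos t₀ ht₀mem.1) 2) (hP_pos t₀ ht₀mem.1)
    refine ⟨M / c, div_nonneg hM0 hc.le, ?_⟩
    intro t ht
    have hGt : |G t| ≤ M * t := by
      have := intervalIntegral.norm_integral_le_of_norm_le_const (C := M) (f := h)
        (a := 0) (b := t) ?_
      · rw [sub_zero] at this
        simpa [hG_def, abs_of_pos ht.1] using this
      · intro x hx
        rw [Set.uIoc_of_le ht.1.le] at hx
        exact hM x ⟨hx.1.le, hx.2.trans ht.2⟩
    have hlow : c * t ≤ f₀ t ^ 2 * p t := by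
      rw [hpP t ht.1, ← mul_assoc]
      exact mul_le_mul_of_nonneg_right (ht₀min ⟨ht.1.le, ht.2⟩) ht.1.le
    have hct : 0 < c * t := mul_pos hc ht.1
    have hwabs : |w t| = (f₀ t ^ 2 * p t)⁻¹ * |G t| := by
      have hpos := mul_pos (pow_pos (hf₀_pos t ht.1.le) 2) (hp_pos t ht.1)
      simp only [hw_def, abs_mul, abs_inv, abs_of_pos hpos]
    rw [hwabs]
    calc (f₀ t ^ 2 * p t)⁻¹ * |G t| ≤ (c * t)⁻¹ * (M * t) := by
          apply mul_le_mul ((inv_anti₀ hct hlow)) hGt (abs_nonneg _)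
          positivity
      _ = M / c := by field_simp [ht.1.ne']
  -- part 2
  have part2 : ∀ τ > (0:ℝ), IntervalIntegrable w volume 0 τ := by
    intro τ hτ
    obtain ⟨C, hC0, hC⟩ := hbound τ hτ
    rw [intervalIntegrable_iff_integrableOn_Ioc_of_le hτ.le]
    refine ⟨((hw_contIoi.mono Set.Ioc_subset_Ioi_self).aestronglyMeasurable
      measurableSet_Ioc), ?_⟩
    apply MeasureTheory.HasFiniteIntegral.restrict_of_bounded (C := C) measure_Ioc_lt_top
    exact (ae_restrict_iff' measurableSet_Ioc).2 (Filter.Eventually.of_forall fun x hx => by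
      simpa [Real.norm_eq_abs] using hC x hx)
  set F : ℝ → ℝ := fun τ => ∫ t in (0:ℝ)..τ, w t with hF_def
  have hF_deriv : ∀ τ > (0:ℝ), HasDerivAt F (w τ) τ := fun τ hτ =>
    intervalIntegral.integral_hasDerivAt_right (part2 τ hτ)
      (hw_contIoi.stronglyMeasurableAtFilter isOpen_Ioi τ hτ) (hw_contAt τ hτ)
  have hf_eq : f = fun τ => f₀ τ * F τ := rfl
  have hf₀_diffIoi : DifferentiableOn ℝ f₀ (Set.Ioi 0) := hf₀_smooth.differentiableOn (by simp)
  have hp_diffIoi : DifferentiableOn ℝ p (Set.Ioi 0) := hp_smooth.differentiableOn (by simp)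
  have hf₀d : ∀ t > (0:ℝ), HasDerivAt f₀ (deriv f₀ t) t := fun t ht =>
    ((hf₀_diffIoi t ht).differentiableAt (hmem t ht)).hasDerivAt
  have hpd : ∀ t > (0:ℝ), HasDerivAt p (deriv p t) t := fun t ht =>
    ((hp_diffIoi t ht).differentiableAt (hmem t ht)).hasDerivAt
  have hf₀'_smooth : ContDiffOn ℝ (⊤ : ℕ∞) (deriv f₀) (Set.Ioi 0) :=
    hf₀_smooth.deriv_of_isOpen isOpen_Ioi (by simp)
  have hf₀dd : ∀ t > (0:ℝ), HasDerivAt (deriv f₀) (deriv (deriv f₀) t) t := fun t ht =>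
    (((hf₀'_smooth.differentiableOn (by simp)) t ht).differentiableAt (hmem t ht)).hasDerivAt
  have hfd : ∀ t > (0:ℝ), HasDerivAt f (deriv f₀ t * F t + f₀ t * w t) t := by
    intro t ht
    rw [hf_eq]
    exact (hf₀d t ht).mul (hF_deriv t ht)
  -- part 3
  have part3 : ∀ τ > (0:ℝ),
      deriv (deriv f) τ + deriv (fun t => Real.log (p t)) τ * deriv f τ + q τ * f τ = g τ := by
    intro τ hτ
    have hderivf : deriv f τ = deriv f₀ τ * F τ + f₀ τ * w τ := (hfd τ hτ).deriv
    have hwdτ := ((((hf₀d τ hτ).pow 2).mul (hpd τ hτ)).inv (hA τ hτ)).mul (hG_deriv τ hτ)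
    have hφd := ((hf₀dd τ hτ).mul (hF_deriv τ hτ)).add ((hf₀d τ hτ).mul hwdτ)
    have heq : deriv f =ᶠ[𝓝 τ] fun t => deriv f₀ t * F t + f₀ t * w t := by
      filter_upwards [hmem τ hτ] with t ht using (hfd t ht).deriv
    have hdd := (hφd.congr_of_eventuallyEq heq).deriv
    have hlog : deriv (fun t => Real.log (p t)) τ = deriv p τ / p τ :=
      ((hpd τ hτ).log (hpne τ hτ)).deriv
    have ode := hf₀_ode τ hτ
    rw [hlog] at ode
    have hA'' : deriv (deriv f₀) τ = -(deriv p τ / p τ * deriv f₀ τ + q τ * f₀ τ) := by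
      linarith
    rw [hdd, hlog, hderivf, hf_eq]
    simp only [hw_def, hh_def, hA'', Pi.mul_apply, Pi.inv_apply, Pi.pow_apply]
    have h1 : f₀ τ ≠ 0 := hf₀ne τ hτ
    have h2 : p τ ≠ 0 := hpne τ hτ
    field_simp
    ring
  refine ⟨part1, part2, part3, ?_, ?_⟩
  · -- f → 0
    have hf₀_cw : Filter.Tendsto f₀ (𝓝[>] (0:ℝ)) (𝓝 (f₀ 0)) :=
      (hf₀_C1.continuousOn 0 Set.self_mem_Ici).mono Set.Ioi_subset_Ici_self
    have hF0 : Filter.Tendsto F (𝓝[>] (0:ℝ)) (𝓝 0) := by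
      obtain ⟨C, hC0, hC⟩ := hbound 1 one_pos
      apply squeeze_zero_norm' (a := fun τ => C * τ)
      · filter_upwards [Ioc_mem_nhdsGT (one_pos)] with τ hτ
        have hb : ∀ x ∈ Set.uIoc (0:ℝ) τ, ‖w x‖ ≤ C := by
          intro x hx
          rw [Set.uIoc_of_le hτ.1.le] at hx
          simpa [Real.norm_eq_abs] using hC x ⟨hx.1, hx.2.trans hτ.2⟩
        have := intervalIntegral.norm_integral_le_of_norm_le_const hb
        simpa [hF_def, abs_of_pos hτ.1] using this
      · have : Filter.Tendsto (fun τ : ℝ => C * τ) (𝓝 0) (𝓝 (C * 0)) :=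
          (continuous_const.mul continuous_id).tendsto 0
        rw [mul_zero] at this
        exact this.mono_left nhdsWithin_le_nhds
    rw [hf_eq]
    simpa using hf₀_cw.mul hF0
  · -- deriv f → 0
    have hf₀_cw : Filter.Tendsto f₀ (𝓝[>] (0:ℝ)) (𝓝 (f₀ 0)) :=
      (hf₀_C1.continuousOn 0 Set.self_mem_Ici).mono Set.Ioi_subset_Ici_self
    have hF0 : Filter.Tendsto F (𝓝[>] (0:ℝ)) (𝓝 0) := by
      obtain ⟨C, hC0, hC⟩ := hbound 1 one_pos
      apply squeeze_zero_norm' (a := fun τ => C * τ)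
      · filter_upwards [Ioc_mem_nhdsGT (one_pos)] with τ hτ
        have hb : ∀ x ∈ Set.uIoc (0:ℝ) τ, ‖w x‖ ≤ C := by
          intro x hx
          rw [Set.uIoc_of_le hτ.1.le] at hx
          simpa [Real.norm_eq_abs] using hC x ⟨hx.1, hx.2.trans hτ.2⟩
        have := intervalIntegral.norm_integral_le_of_norm_le_const hb
        simpa [hF_def, abs_of_pos hτ.1] using this
      · have : Filter.Tendsto (fun τ : ℝ => C * τ) (𝓝 0) (𝓝 (C * 0)) :=
          (continuous_const.mul continuous_id).tendsto 0
        rw [mul_zero] at this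
        exact this.mono_left nhdsWithin_le_nhds
    -- w → 0
    have hG0 : G 0 = 0 := intervalIntegral.integral_same
    have hGd0 : HasDerivWithinAt G (h 0) (Set.Ici 0) 0 :=
      intervalIntegral.integral_hasDerivWithinAt_right
        (IntervalIntegrable.refl)
        (hh_contIoi.stronglyMeasurableAtFilter_nhdsWithin measurableSet_Ioi 0)
        ((hh_cont 0 Set.self_mem_Ici).mono Set.Ioi_subset_Ici_self)
    have hslope : Filter.Tendsto (fun t => t⁻¹ * G t) (𝓝[>] (0:ℝ)) (𝓝 0) := by
      have h1 := hasDerivWithinAt_iff_tendsto_slope.1 hGd0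
      rw [hh0, Set.Ici_sdiff_left] at h1
      apply h1.congr
      intro t
      simp [slope_def_field, hG0, div_eq_inv_mul]
    have hden : Filter.Tendsto (fun t => (f₀ t ^ 2 * P t)⁻¹) (𝓝[>] (0:ℝ))
        (𝓝 ((f₀ 0 ^ 2 * P 0)⁻¹)) := by
      have hc : Filter.Tendsto (fun t => f₀ t ^ 2 * P t) (𝓝[>] (0:ℝ)) (𝓝 (f₀ 0 ^ 2 * P 0)) :=
        (hf₀_cw.pow 2).mul ((hP_cont 0 Set.self_mem_Ici).mono Set.Ioi_subset_Ici_self)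
      exact hc.inv₀ (mul_ne_zero (pow_ne_zero _ (hf₀_pos 0 le_rfl).ne')
        (hP_pos 0 le_rfl).ne')
    have hw0 : Filter.Tendsto w (𝓝[>] (0:ℝ)) (𝓝 0) := by
      have h2 := hden.mul hslope
      rw [mul_zero] at h2
      apply h2.congr'
      filter_upwards [eventually_mem_nhdsWithin] with t ht
      simp only [hw_def]
      rw [hpP t ht]
      ring
    -- deriv f₀ tendsto
    have hd0 : Filter.Tendsto (deriv f₀) (𝓝[>] (0:ℝ))
        (𝓝 (derivWithin f₀ (Set.Ici 0) 0)) := by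
      have hcontd := hf₀_C1.continuousOn_derivWithin (uniqueDiffOn_Ici 0) le_rfl
      have h3 : Filter.Tendsto (derivWithin f₀ (Set.Ici 0)) (𝓝[>] (0:ℝ))
          (𝓝 (derivWithin f₀ (Set.Ici 0) 0)) :=
        (hcontd 0 Set.self_mem_Ici).mono Set.Ioi_subset_Ici_self
      apply h3.congr'
      filter_upwards [eventually_mem_nhdsWithin] with t ht
      exact derivWithin_of_mem_nhds (Ici_mem_nhds ht)
    have hφ := (hd0.mul hF0).add (hf₀_cw.mul hw0)
    rw [mul_zero, mul_zero, add_zero] at hφ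
    apply hφ.congr'
    filter_upwards [eventually_mem_nhdsWithin] with t ht
    exact ((hfd t ht).deriv).symm
end

section
/- Let μ ∈ (0, 1/2), let P, Q : ℝ → ℝ be smooth with P odd, and define G(σ)(τ) = σ''(τ) + P(σ'(τ))/τ + Q(σ'(τ))/σ(τ) and L_σ f = f'' + (P'(σ')/τ + Q'(σ')/σ)·f' − (Q(σ')/σ²)·f. Suppose σ : ℝ → ℝ is smooth, even, satisfies σ(τ) ≥ 1 and σ(τ) ≥ |τ| and 0 ≤ σ'(τ) ≤ 1 for all τ ≥ 0, and solves G(σ) = 0 on (0,∞). Suppose f : ℝ → ℝ is smooth, even, and there is K > 0 with |f(τ)| ≤ K·σ(τ)^{−μ} and |f'(τ)| ≤ K·σ(τ)^{−μ−1} for all τ ≥ 0. Then there exist ε₁ > 0 and C > 0 such that for all ε with |ε| ≤ ε₁ and all τ > 0: |G(σ + εf)(τ) − ε·L_σ f(τ)| ≤ C·ε²·σ(τ)^{−3−2μ}. -/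
open scoped Topology

section QuadraticExpansionHelpers

private lemma abs_le_abs_of_uIcc' {t ε : ℝ} (h : t ∈ Set.uIcc 0 ε) : |t| ≤ |ε| := by
  rcases Set.mem_uIcc.1 h with ⟨h1, h2⟩ | ⟨h1, h2⟩ <;>
    rw [abs_le] <;> constructor <;> linarith [le_abs_self ε, neg_abs_le ε]

private lemma segA' {g g' : ℝ → ℝ} {x y C : ℝ}
    (hd : ∀ t ∈ Set.uIcc x y, HasDerivAt g (g' t) t)
    (hb : ∀ t ∈ Set.uIcc x y, |g' t| ≤ C) :
    |g y - g x| ≤ C * |y - x| := by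
  have := Convex.norm_image_sub_le_of_norm_hasDerivWithin_le
    (f := g) (f' := g') (s := Set.uIcc x y)
    (fun t ht => (hd t ht).hasDerivWithinAt) (fun t ht => by simpa using hb t ht)
    (convex_uIcc x y) Set.left_mem_uIcc Set.right_mem_uIcc
  simpa [Real.norm_eq_abs] using this

private lemma segB' {g g1 g2 : ℝ → ℝ} {ε C : ℝ}
    (hd1 : ∀ t ∈ Set.uIcc 0 ε, HasDerivAt g (g1 t) t)
    (hd2 : ∀ t ∈ Set.uIcc 0 ε, HasDerivAt g1 (g2 t) t)
    (hb : ∀ t ∈ Set.uIcc 0 ε, |g2 t| ≤ C) :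
    |g ε - g 0 - ε * g1 0| ≤ C * ε ^ 2 := by
  have hC : 0 ≤ C := (abs_nonneg _).trans (hb 0 Set.left_mem_uIcc)
  have key : ∀ t ∈ Set.uIcc 0 ε, |g1 t - g1 0| ≤ C * |ε| := by
    intro t ht
    have hsub : Set.uIcc 0 t ⊆ Set.uIcc 0 ε := Set.uIcc_subset_uIcc Set.left_mem_uIcc ht
    calc |g1 t - g1 0| ≤ C * |t - 0| :=
          segA' (fun s hs => hd2 s (hsub hs)) (fun s hs => hb s (hsub hs))
      _ ≤ C * |ε| := by
          rw [sub_zero]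
          exact mul_le_mul_of_nonneg_left (abs_le_abs_of_uIcc' ht) hC
  have h2 : |(g ε - ε * g1 0) - (g 0 - 0 * g1 0)| ≤ (C * |ε|) * |ε - 0| := by
    refine segA' (g := fun t => g t - t * g1 0) (g' := fun t => g1 t - g1 0) ?_ key
    intro t ht
    have h := (hd1 t ht).sub ((hasDerivAt_id t).mul_const (g1 0))
    simp only [one_mul] at h
    exact h
  rw [zero_mul, sub_zero, sub_zero] at h2
  calc |g ε - g 0 - ε * g1 0| = |(g ε - ε * g1 0) - g 0| := by ring_nf
    _ ≤ C * |ε| * |ε| := h2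
    _ = C * ε ^ 2 := by rw [mul_assoc, abs_mul_abs_self]; ring

private lemma mul3_le' {x1 x2 x3 y1 y2 y3 : ℝ} (h1 : |x1| ≤ y1) (h2 : |x2| ≤ y2)
    (h3 : |x3| ≤ y3) : |x1 * x2 * x3| ≤ y1 * y2 * y3 := by
  rw [abs_mul, abs_mul]
  have e1 := abs_nonneg x1; have e2 := abs_nonneg x2; have e3 := abs_nonneg x3
  exact mul_le_mul (mul_le_mul h1 h2 e2 (e1.trans h1)) h3 e3
    (mul_nonneg (e1.trans h1) (e2.trans h2))

private lemma absdiv' {x y D d : ℝ} (hx : |x| ≤ y) (h0 : 0 < d) (hdD : d ≤ D) :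
    |x / D| ≤ y / d := by
  rw [abs_div, abs_of_pos (lt_of_lt_of_le h0 hdD)]
  exact div_le_div₀ ((abs_nonneg x).trans hx) hx h0 hdD

end QuadraticExpansionHelpers

/-- The radial operator `G(σ)(τ) = σ''(τ) + P(σ'(τ))/τ + Q(σ'(τ))/σ(τ)` determined by
coefficient functions `P` and `Q`. -/
noncomputable def GopPQ (P Q σ : ℝ → ℝ) (τ : ℝ) : ℝ :=
  deriv (deriv σ) τ + P (deriv σ τ) / τ + Q (deriv σ τ) / σ τ

/-- The linearization of `G` at `σ`:
`L_σ f = f'' + (P'(σ')/τ + Q'(σ')/σ)·f' - (Q(σ')/σ²)·f`. -/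
noncomputable def LopPQ (P Q σ f : ℝ → ℝ) (τ : ℝ) : ℝ :=
  deriv (deriv f) τ +
    (deriv P (deriv σ τ) / τ + deriv Q (deriv σ τ) / σ τ) * deriv f τ -
    (Q (deriv σ τ) / σ τ ^ 2) * f τ

set_option maxHeartbeats 1000000 in
/-- Second-order Taylor estimate for the radial operator: if `σ` solves `G(σ) = 0`, is
even with `σ ≥ 1`, `σ ≥ |τ|`, `0 ≤ σ' ≤ 1`, and `f` is even with `|f| ≤ K σ^(-μ)`,
`|f'| ≤ K σ^(-μ-1)`, then `|G(σ + εf) - ε L_σ f| ≤ C ε² σ^(-3-2μ)` for all small `ε`. -/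
theorem quadratic_expansion_error (μ : ℝ) (hμ : 0 < μ) (hμ' : μ < 1 / 2)
    (P Q : ℝ → ℝ) (hP : ContDiff ℝ (⊤ : ℕ∞) P) (hQ : ContDiff ℝ (⊤ : ℕ∞) Q)
    (hP_odd : ∀ s, P (-s) = -P s)
    (σ : ℝ → ℝ) (hσ_smooth : ContDiff ℝ (⊤ : ℕ∞) σ)
    (hσ_even : ∀ τ, σ (-τ) = σ τ)
    (hσ_ge1 : ∀ τ : ℝ, 0 ≤ τ → 1 ≤ σ τ)
    (hσ_ge : ∀ τ : ℝ, 0 ≤ τ → |τ| ≤ σ τ)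
    (hσ'_nonneg : ∀ τ : ℝ, 0 ≤ τ → 0 ≤ deriv σ τ)
    (hσ'_le : ∀ τ : ℝ, 0 ≤ τ → deriv σ τ ≤ 1)
    (hσ_ode : ∀ τ > (0 : ℝ), GopPQ P Q σ τ = 0)
    (f : ℝ → ℝ) (hf_smooth : ContDiff ℝ (⊤ : ℕ∞) f)
    (hf_even : ∀ τ, f (-τ) = f τ)
    (K : ℝ) (hK : 0 < K)
    (hf_bd : ∀ τ : ℝ, 0 ≤ τ → |f τ| ≤ K * σ τ ^ (-μ))
    (hf'_bd : ∀ τ : ℝ, 0 ≤ τ → |deriv f τ| ≤ K * σ τ ^ (-μ - 1)) :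
    ∃ (ε₁ C : ℝ), 0 < ε₁ ∧ 0 < C ∧
      ∀ ε : ℝ, |ε| ≤ ε₁ → ∀ τ > (0 : ℝ),
        |GopPQ P Q (fun t => σ t + ε * f t) τ - ε * LopPQ P Q σ f τ| ≤
          C * ε ^ 2 * σ τ ^ (-3 - 2 * μ) := by
  classical
  -- basic differentiability facts
  have hPd : Differentiable ℝ P := hP.differentiable (by simp)
  have hQd : Differentiable ℝ Q := hQ.differentiable (by simp)
  have hP' : ContDiff ℝ (⊤ : ℕ∞) (deriv P) := (contDiff_infty_iff_deriv.mp (hP.of_le (by simp))).2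
  have hQ' : ContDiff ℝ (⊤ : ℕ∞) (deriv Q) := (contDiff_infty_iff_deriv.mp (hQ.of_le (by simp))).2
  have hP'd : Differentiable ℝ (deriv P) := hP'.differentiable (by simp)
  have hQ'd : Differentiable ℝ (deriv Q) := hQ'.differentiable (by simp)
  have hP''c : Continuous (deriv (deriv P)) := ((contDiff_infty_iff_deriv.mp hP').2).continuous
  have hQ''c : Continuous (deriv (deriv Q)) := ((contDiff_infty_iff_deriv.mp hQ').2).continuous
  have hσd : Differentiable ℝ σ := hσ_smooth.differentiable (by simp)
  have hσ' : ContDiff ℝ (⊤ : ℕ∞) (deriv σ) :=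
    (contDiff_infty_iff_deriv.mp (hσ_smooth.of_le (by simp))).2
  have hσ'd : Differentiable ℝ (deriv σ) := hσ'.differentiable (by simp)
  have hfd : Differentiable ℝ f := hf_smooth.differentiable (by simp)
  have hf' : ContDiff ℝ (⊤ : ℕ∞) (deriv f) :=
    (contDiff_infty_iff_deriv.mp (hf_smooth.of_le (by simp))).2
  have hf'd : Differentiable ℝ (deriv f) := hf'.differentiable (by simp)
  have hf''c : Continuous (deriv (deriv f)) := ((contDiff_infty_iff_deriv.mp hf').2).continuous
  -- bounds on compact sets
  obtain ⟨MP₀, hMP₀⟩ := (isCompact_Icc :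
    IsCompact (Set.Icc (-2 : ℝ) 2)).exists_bound_of_continuousOn hP''c.continuousOn
  obtain ⟨MQ0₀, hMQ0₀⟩ := (isCompact_Icc :
    IsCompact (Set.Icc (-2 : ℝ) 2)).exists_bound_of_continuousOn hQ.continuous.continuousOn
  obtain ⟨MQ1₀, hMQ1₀⟩ := (isCompact_Icc :
    IsCompact (Set.Icc (-2 : ℝ) 2)).exists_bound_of_continuousOn hQ'.continuous.continuousOn
  obtain ⟨MQ2₀, hMQ2₀⟩ := (isCompact_Icc :
    IsCompact (Set.Icc (-2 : ℝ) 2)).exists_bound_of_continuousOn hQ''c.continuousOn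
  obtain ⟨B2₀, hB2₀⟩ := (isCompact_Icc :
    IsCompact (Set.Icc (-1 : ℝ) 1)).exists_bound_of_continuousOn hf''c.continuousOn
  set MP := max MP₀ 1 with hMP_def
  set MQ0 := max MQ0₀ 1 with hMQ0_def
  set MQ1 := max MQ1₀ 1 with hMQ1_def
  set MQ2 := max MQ2₀ 1 with hMQ2_def
  set B2 := max B2₀ 1 with hB2_def
  have hMP : ∀ x ∈ Set.Icc (-2 : ℝ) 2, |deriv (deriv P) x| ≤ MP := fun x hx =>
    le_trans (by simpa using hMP₀ x hx) (le_max_left _ _)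
  have hMQ0 : ∀ x ∈ Set.Icc (-2 : ℝ) 2, |Q x| ≤ MQ0 := fun x hx =>
    le_trans (by simpa using hMQ0₀ x hx) (le_max_left _ _)
  have hMQ1 : ∀ x ∈ Set.Icc (-2 : ℝ) 2, |deriv Q x| ≤ MQ1 := fun x hx =>
    le_trans (by simpa using hMQ1₀ x hx) (le_max_left _ _)
  have hMQ2 : ∀ x ∈ Set.Icc (-2 : ℝ) 2, |deriv (deriv Q) x| ≤ MQ2 := fun x hx =>
    le_trans (by simpa using hMQ2₀ x hx) (le_max_left _ _)
  have hB2 : ∀ x ∈ Set.Icc (-1 : ℝ) 1, |deriv (deriv f) x| ≤ B2 := fun x hx =>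
    le_trans (by simpa using hB2₀ x hx) (le_max_left _ _)
  have hMP1 : (1 : ℝ) ≤ MP := le_max_right _ _
  have hMQ01 : (1 : ℝ) ≤ MQ0 := le_max_right _ _
  have hMQ11 : (1 : ℝ) ≤ MQ1 := le_max_right _ _
  have hMQ21 : (1 : ℝ) ≤ MQ2 := le_max_right _ _
  have hB21 : (1 : ℝ) ≤ B2 := le_max_right _ _
  have hMPpos : (0 : ℝ) < MP := lt_of_lt_of_le one_pos hMP1
  have hB2pos : (0 : ℝ) < B2 := lt_of_lt_of_le one_pos hB21
  -- deriv f vanishes at 0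
  have hf'0 : deriv f 0 = 0 := by
    have h1 : deriv (fun x => f (-x)) 0 = -deriv f (-0) := deriv_comp_neg f 0
    have h2 : (fun x => f (-x)) = f := funext hf_even
    rw [h2] at h1
    simp only [neg_zero] at h1
    linarith
  -- growth of σ
  have hσ_growth : ∀ t : ℝ, 0 ≤ t → σ t ≤ σ 0 + t := by
    intro t ht
    have hA : |σ t - σ 0| ≤ 1 * |t - 0| := by
      refine segA' (fun s _ => (hσd s).hasDerivAt) ?_
      intro s hs
      rw [Set.uIcc_of_le ht] at hs
      rw [abs_of_nonneg (hσ'_nonneg s hs.1)]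
      exact hσ'_le s hs.1
    rw [sub_zero, one_mul, abs_of_nonneg ht] at hA
    have := (abs_le.mp hA).2
    linarith
  -- bound for deriv f near 0
  have hf'_lin : ∀ t : ℝ, 0 ≤ t → t ≤ 1 → |deriv f t| ≤ B2 * t := by
    intro t ht ht1
    have hA : |deriv f t - deriv f 0| ≤ B2 * |t - 0| := by
      refine segA' (fun s _ => (hf'd s).hasDerivAt) ?_
      intro s hs
      rw [Set.uIcc_of_le ht] at hs
      exact hB2 s ⟨by linarith [hs.1], by linarith [hs.2]⟩
    rw [hf'0, sub_zero, sub_zero, abs_of_nonneg ht] at hA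
    exact hA
  set S0 := σ 0 with hS0_def
  have hS0 : 1 ≤ S0 := hσ_ge1 0 le_rfl
  have hS0pos : (0 : ℝ) < S0 + 1 := by linarith
  -- the constants
  set c1 := MP * B2 ^ 2 * (S0 + 1) ^ (3 + 2 * μ) with hc1_def
  set c2 := MP * K ^ 2 * (S0 + 1) with hc2_def
  set c3 := (2 * MQ2 + 8 * MQ1 + 16 * MQ0) * K ^ 2 with hc3_def
  have hc1pos : 0 < c1 :=
    mul_pos (mul_pos hMPpos (pow_pos hB2pos 2)) (Real.rpow_pos_of_pos hS0pos _)
  have hc2pos : 0 < c2 := mul_pos (mul_pos hMPpos (pow_pos hK 2)) hS0pos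
  have hc3pos : 0 < c3 := by
    have : (0 : ℝ) < 2 * MQ2 + 8 * MQ1 + 16 * MQ0 := by linarith
    exact mul_pos this (pow_pos hK 2)
  refine ⟨1 / (2 * K), c1 + c2 + c3 + 1, div_pos one_pos (by linarith), by linarith, ?_⟩
  intro ε hε τ hτ
  have hτ0 : (0 : ℝ) ≤ τ := hτ.le
  have hτne : τ ≠ 0 := ne_of_gt hτ
  have hb1 : 1 ≤ σ τ := hσ_ge1 τ hτ0
  have hbpos : (0 : ℝ) < σ τ := by linarith
  have hbne : σ τ ≠ 0 := ne_of_gt hbpos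
  have ha0 : 0 ≤ deriv σ τ := hσ'_nonneg τ hτ0
  have ha1 : deriv σ τ ≤ 1 := hσ'_le τ hτ0
  have hp1 : σ τ ^ (-μ) ≤ 1 := Real.rpow_le_one_of_one_le_of_nonpos hb1 (by linarith)
  have hppos : 0 < σ τ ^ (-μ) := Real.rpow_pos_of_pos hbpos _
  have hv : |f τ| ≤ K * σ τ ^ (-μ) := hf_bd τ hτ0
  have hu : |deriv f τ| ≤ K * σ τ ^ (-μ) / σ τ := by
    have h1 := hf'_bd τ hτ0
    have h2 : σ τ ^ (-μ - 1) = σ τ ^ (-μ) / σ τ := by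
      rw [show -μ - 1 = -μ + (-1) by ring, Real.rpow_add hbpos, Real.rpow_neg_one,
        div_eq_mul_inv]
    rw [h2] at h1
    calc |deriv f τ| ≤ K * (σ τ ^ (-μ) / σ τ) := h1
      _ = K * σ τ ^ (-μ) / σ τ := by ring
  have hvK : |f τ| ≤ K := hv.trans (mul_le_of_le_one_right hK.le hp1)
  have huK : |deriv f τ| ≤ K := by
    refine hu.trans ?_
    rw [div_le_iff₀ hbpos]
    have h1 : K * σ τ ^ (-μ) ≤ K := mul_le_of_le_one_right hK.le hp1
    have h2 : K ≤ K * σ τ := le_mul_of_one_le_right hK.le hb1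
    linarith
  have hεK : |ε| * K ≤ 1 / 2 := by
    have h1 : |ε| * K ≤ (1 / (2 * K)) * K := mul_le_mul_of_nonneg_right hε hK.le
    have h2 : (1 / (2 * K)) * K = 1 / 2 := by field_simp
    linarith
  have htv_half : ∀ t ∈ Set.uIcc 0 ε, |t * f τ| ≤ 1 / 2 := by
    intro t ht
    rw [abs_mul]
    calc |t| * |f τ| ≤ |ε| * K :=
        mul_le_mul (abs_le_abs_of_uIcc' ht) hvK (abs_nonneg _) (abs_nonneg _)
      _ ≤ 1 / 2 := hεK
  have htu_half : ∀ t ∈ Set.uIcc 0 ε, |t * deriv f τ| ≤ 1 / 2 := by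
    intro t ht
    rw [abs_mul]
    calc |t| * |deriv f τ| ≤ |ε| * K :=
        mul_le_mul (abs_le_abs_of_uIcc' ht) huK (abs_nonneg _) (abs_nonneg _)
      _ ≤ 1 / 2 := hεK
  have hmem : ∀ t ∈ Set.uIcc 0 ε, deriv σ τ + t * deriv f τ ∈ Set.Icc (-2 : ℝ) 2 := by
    intro t ht
    have h := abs_le.mp (htu_half t ht)
    exact ⟨by linarith [h.1], by linarith [h.2]⟩
  have hDen : ∀ t ∈ Set.uIcc 0 ε, σ τ / 2 ≤ σ τ + t * f τ := by
    intro t ht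
    have h := abs_le.mp (htv_half t ht)
    linarith [h.1]
  have hDne : ∀ t ∈ Set.uIcc 0 ε, σ τ + t * f τ ≠ 0 := fun t ht =>
    ne_of_gt (lt_of_lt_of_le (by linarith : (0 : ℝ) < σ τ / 2) (hDen t ht))
  have hεmem : ε ∈ Set.uIcc (0 : ℝ) ε := Set.right_mem_uIcc
  -- linear maps
  have lin_a : ∀ t : ℝ, HasDerivAt (fun s : ℝ => deriv σ τ + s * deriv f τ) (deriv f τ) t := by
    intro t
    simpa using ((hasDerivAt_id t).mul_const (deriv f τ)).const_add (deriv σ τ)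
  have lin_b : ∀ t : ℝ, HasDerivAt (fun s : ℝ => σ τ + s * f τ) (f τ) t := by
    intro t
    simpa using ((hasDerivAt_id t).mul_const (f τ)).const_add (σ τ)
  -- first and second derivatives of the perturbed function
  have hdsum : ∀ t : ℝ, deriv (fun s => σ s + ε * f s) t = deriv σ t + ε * deriv f t := by
    intro t
    rw [deriv_fun_add (hσd t) ((hfd t).const_mul ε), deriv_const_mul ε (hfd t)]
  have hdd : deriv (deriv (fun s => σ s + ε * f s)) τ =
      deriv (deriv σ) τ + ε * deriv (deriv f) τ := by
    have hfun : deriv (fun s => σ s + ε * f s) = fun t => deriv σ t + ε * deriv f t :=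
      funext hdsum
    rw [hfun, deriv_fun_add (hσ'd τ) ((hf'd τ).const_mul ε), deriv_const_mul ε (hf'd τ)]
  have hσ'' : deriv (deriv σ) τ = -(P (deriv σ τ) / τ + Q (deriv σ τ) / σ τ) := by
    have h := hσ_ode τ hτ
    simp only [GopPQ] at h
    linarith
  have hbεne : σ τ + ε * f τ ≠ 0 := hDne ε hεmem
  -- the exact algebraic form of the error
  have E_eq : GopPQ P Q (fun t => σ t + ε * f t) τ - ε * LopPQ P Q σ f τ =
      (P (deriv σ τ + ε * deriv f τ) - P (deriv σ τ) -
        ε * (deriv P (deriv σ τ) * deriv f τ)) / τ +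
      (Q (deriv σ τ + ε * deriv f τ) / (σ τ + ε * f τ) - Q (deriv σ τ) / σ τ -
        ε * ((deriv Q (deriv σ τ) * deriv f τ * σ τ - Q (deriv σ τ) * f τ) / σ τ ^ 2)) := by
    simp only [GopPQ, LopPQ, hdd, hdsum τ, hσ'']
    field_simp
    ring
  rw [E_eq]
  -- P-term estimate
  have hT1 : |P (deriv σ τ + ε * deriv f τ) - P (deriv σ τ) -
      ε * (deriv P (deriv σ τ) * deriv f τ)| ≤ (MP * deriv f τ ^ 2) * ε ^ 2 := by
    have hbnd : ∀ t ∈ Set.uIcc (0 : ℝ) ε,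
        |deriv (deriv P) (deriv σ τ + t * deriv f τ) * deriv f τ * deriv f τ| ≤
          MP * deriv f τ ^ 2 := by
      intro t ht
      calc |deriv (deriv P) (deriv σ τ + t * deriv f τ) * deriv f τ * deriv f τ|
          ≤ MP * |deriv f τ| * |deriv f τ| := mul3_le' (hMP _ (hmem t ht)) le_rfl le_rfl
        _ = MP * deriv f τ ^ 2 := by rw [mul_assoc, abs_mul_abs_self]; ring
    have hseg := segB' (g := fun s => P (deriv σ τ + s * deriv f τ))
      (g1 := fun s => deriv P (deriv σ τ + s * deriv f τ) * deriv f τ)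
      (g2 := fun s => deriv (deriv P) (deriv σ τ + s * deriv f τ) * deriv f τ * deriv f τ)
      (fun t _ => ((hPd _).hasDerivAt.comp t (lin_a t)))
      (fun t _ => (((hP'd _).hasDerivAt.comp t (lin_a t)).mul_const _)) hbnd
    simpa using hseg
  -- Q-term estimate
  have hT2 : |Q (deriv σ τ + ε * deriv f τ) / (σ τ + ε * f τ) - Q (deriv σ τ) / σ τ -
      ε * ((deriv Q (deriv σ τ) * deriv f τ * σ τ - Q (deriv σ τ) * f τ) / σ τ ^ 2)| ≤
      (c3 * (σ τ ^ (-μ) * σ τ ^ (-μ) / σ τ ^ 3)) * ε ^ 2 := by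
    have hder1 : ∀ t ∈ Set.uIcc (0 : ℝ) ε,
        HasDerivAt (fun s => Q (deriv σ τ + s * deriv f τ) / (σ τ + s * f τ))
          ((deriv Q (deriv σ τ + t * deriv f τ) * deriv f τ * (σ τ + t * f τ) -
            Q (deriv σ τ + t * deriv f τ) * f τ) / (σ τ + t * f τ) ^ 2) t := by
      intro t ht
      exact (((hQd _).hasDerivAt.comp t (lin_a t)).div (lin_b t) (hDne t ht))
    have hder2 : ∀ t ∈ Set.uIcc (0 : ℝ) ε,
        HasDerivAt (fun s => (deriv Q (deriv σ τ + s * deriv f τ) * deriv f τ *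
            (σ τ + s * f τ) - Q (deriv σ τ + s * deriv f τ) * f τ) / (σ τ + s * f τ) ^ 2)
          (deriv (deriv Q) (deriv σ τ + t * deriv f τ) * deriv f τ * deriv f τ /
            (σ τ + t * f τ)
          - deriv Q (deriv σ τ + t * deriv f τ) * deriv f τ * f τ * 2 / (σ τ + t * f τ) ^ 2
          + Q (deriv σ τ + t * deriv f τ) * f τ * f τ * 2 / (σ τ + t * f τ) ^ 3) t := by
      intro t ht
      have hQ'c : HasDerivAt (fun s => deriv Q (deriv σ τ + s * deriv f τ))
          (deriv (deriv Q) (deriv σ τ + t * deriv f τ) * deriv f τ) t :=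
        ((hQ'd _).hasDerivAt.comp t (lin_a t))
      have hQc : HasDerivAt (fun s => Q (deriv σ τ + s * deriv f τ))
          (deriv Q (deriv σ τ + t * deriv f τ) * deriv f τ) t :=
        ((hQd _).hasDerivAt.comp t (lin_a t))
      have hN : HasDerivAt (fun s => deriv Q (deriv σ τ + s * deriv f τ) * deriv f τ *
          (σ τ + s * f τ) - Q (deriv σ τ + s * deriv f τ) * f τ)
          ((deriv (deriv Q) (deriv σ τ + t * deriv f τ) * deriv f τ * deriv f τ) *
            (σ τ + t * f τ) +
            (deriv Q (deriv σ τ + t * deriv f τ) * deriv f τ) * f τ -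
            deriv Q (deriv σ τ + t * deriv f τ) * deriv f τ * f τ) t :=
        ((hQ'c.mul_const (deriv f τ)).mul (lin_b t)).sub (hQc.mul_const (f τ))
      have hDenD : HasDerivAt (fun s => (σ τ + s * f τ) ^ 2)
          ((2 : ℕ) * (σ τ + t * f τ) ^ 1 * f τ) t := (lin_b t).pow 2
      have raw : HasDerivAt (fun s => (deriv Q (deriv σ τ + s * deriv f τ) * deriv f τ *
          (σ τ + s * f τ) - Q (deriv σ τ + s * deriv f τ) * f τ) / (σ τ + s * f τ) ^ 2) _ t :=
        hN.div hDenD (pow_ne_zero 2 (hDne t ht))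
      convert raw using 1
      have hDt := hDne t ht
      field_simp
      ring
    have hbnd : ∀ t ∈ Set.uIcc (0 : ℝ) ε,
        |deriv (deriv Q) (deriv σ τ + t * deriv f τ) * deriv f τ * deriv f τ /
            (σ τ + t * f τ)
          - deriv Q (deriv σ τ + t * deriv f τ) * deriv f τ * f τ * 2 / (σ τ + t * f τ) ^ 2
          + Q (deriv σ τ + t * deriv f τ) * f τ * f τ * 2 / (σ τ + t * f τ) ^ 3| ≤
          c3 * (σ τ ^ (-μ) * σ τ ^ (-μ) / σ τ ^ 3) := by
      intro t ht
      have hs := hmem t ht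
      have hDt := hDen t ht
      have hb2pos : (0 : ℝ) < σ τ / 2 := by linarith
      have e1 : |deriv (deriv Q) (deriv σ τ + t * deriv f τ) * deriv f τ * deriv f τ /
          (σ τ + t * f τ)| ≤
          MQ2 * (K * σ τ ^ (-μ) / σ τ) * (K * σ τ ^ (-μ) / σ τ) / (σ τ / 2) :=
        absdiv' (mul3_le' (hMQ2 _ hs) hu hu) hb2pos hDt
      have e2 : |deriv Q (deriv σ τ + t * deriv f τ) * deriv f τ * f τ * 2 /
          (σ τ + t * f τ) ^ 2| ≤
          MQ1 * (K * σ τ ^ (-μ) / σ τ) * (K * σ τ ^ (-μ)) * 2 / ((σ τ / 2) ^ 2) := by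
        refine absdiv' ?_ (pow_pos hb2pos 2) (pow_le_pow_left₀ hb2pos.le hDt 2)
        rw [abs_mul, show |(2:ℝ)| = 2 by norm_num]
        exact mul_le_mul_of_nonneg_right (mul3_le' (hMQ1 _ hs) hu hv) (by norm_num)
      have e3 : |Q (deriv σ τ + t * deriv f τ) * f τ * f τ * 2 / (σ τ + t * f τ) ^ 3| ≤
          MQ0 * (K * σ τ ^ (-μ)) * (K * σ τ ^ (-μ)) * 2 / ((σ τ / 2) ^ 3) := by
        refine absdiv' ?_ (pow_pos hb2pos 3) (pow_le_pow_left₀ hb2pos.le hDt 3)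
        rw [abs_mul, show |(2:ℝ)| = 2 by norm_num]
        exact mul_le_mul_of_nonneg_right (mul3_le' (hMQ0 _ hs) hv hv) (by norm_num)
      have hsum : MQ2 * (K * σ τ ^ (-μ) / σ τ) * (K * σ τ ^ (-μ) / σ τ) / (σ τ / 2) +
          MQ1 * (K * σ τ ^ (-μ) / σ τ) * (K * σ τ ^ (-μ)) * 2 / ((σ τ / 2) ^ 2) +
          MQ0 * (K * σ τ ^ (-μ)) * (K * σ τ ^ (-μ)) * 2 / ((σ τ / 2) ^ 3) =
          c3 * (σ τ ^ (-μ) * σ τ ^ (-μ) / σ τ ^ 3) := by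
        rw [hc3_def]
        field_simp
        ring
      set X := deriv (deriv Q) (deriv σ τ + t * deriv f τ) * deriv f τ * deriv f τ /
        (σ τ + t * f τ) with hX
      set Y := deriv Q (deriv σ τ + t * deriv f τ) * deriv f τ * f τ * 2 /
        (σ τ + t * f τ) ^ 2 with hY
      set Z := Q (deriv σ τ + t * deriv f τ) * f τ * f τ * 2 / (σ τ + t * f τ) ^ 3 with hZ
      have tri : |X - Y + Z| ≤ |X| + |Y| + |Z| := by
        calc |X - Y + Z| ≤ |X - Y| + |Z| := abs_add_le _ _
          _ ≤ (|X| + |Y|) + |Z| := by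
              have h := abs_add_le X (-Y)
              rw [abs_neg] at h
              have h' : |X - Y| ≤ |X| + |Y| := by rw [sub_eq_add_neg]; exact h
              linarith
      calc |X - Y + Z| ≤ |X| + |Y| + |Z| := tri
        _ ≤ MQ2 * (K * σ τ ^ (-μ) / σ τ) * (K * σ τ ^ (-μ) / σ τ) / (σ τ / 2) +
            MQ1 * (K * σ τ ^ (-μ) / σ τ) * (K * σ τ ^ (-μ)) * 2 / ((σ τ / 2) ^ 2) +
            MQ0 * (K * σ τ ^ (-μ)) * (K * σ τ ^ (-μ)) * 2 / ((σ τ / 2) ^ 3) :=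
          add_le_add (add_le_add e1 e2) e3
        _ = c3 * (σ τ ^ (-μ) * σ τ ^ (-μ) / σ τ ^ 3) := hsum
    have hseg := segB' hder1 hder2 hbnd
    simpa using hseg
  -- convert exponents
  have hppb : σ τ ^ (-μ) * σ τ ^ (-μ) / σ τ ^ 3 = σ τ ^ (-3 - 2 * μ) := by
    have h3 : σ τ ^ (-((3 : ℕ) : ℝ)) = (σ τ ^ (3 : ℕ))⁻¹ := by
      rw [Real.rpow_neg hbpos.le, Real.rpow_natCast]
    rw [show (-3 - 2 * μ : ℝ) = -μ + (-μ + -((3 : ℕ) : ℝ)) by push_cast; ring,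
      Real.rpow_add hbpos, Real.rpow_add hbpos, h3]
    ring
  have hWpos : 0 < σ τ ^ (-3 - 2 * μ) := Real.rpow_pos_of_pos hbpos _
  have hεW : 0 ≤ ε ^ 2 * σ τ ^ (-3 - 2 * μ) := mul_nonneg (sq_nonneg ε) hWpos.le
  -- P-term, divided by τ, in both regimes
  have hT1' : |(P (deriv σ τ + ε * deriv f τ) - P (deriv σ τ) -
      ε * (deriv P (deriv σ τ) * deriv f τ)) / τ| ≤
      (c1 + c2) * (ε ^ 2 * σ τ ^ (-3 - 2 * μ)) := by
    rw [abs_div, abs_of_pos hτ]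
    rcases le_or_gt τ 1 with hτ1 | hτ1
    · -- small τ
      have hu2 : |deriv f τ| ≤ B2 * τ := hf'_lin τ hτ0 hτ1
      have hsq : deriv f τ ^ 2 ≤ (B2 * τ) ^ 2 := by
        rw [← sq_abs (deriv f τ)]
        exact pow_le_pow_left₀ (abs_nonneg _) hu2 2
      have h1 : |P (deriv σ τ + ε * deriv f τ) - P (deriv σ τ) -
          ε * (deriv P (deriv σ τ) * deriv f τ)| ≤ MP * (B2 * τ) ^ 2 * ε ^ 2 := by
        refine hT1.trans ?_
        have := mul_le_mul_of_nonneg_left hsq hMPpos.le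
        exact mul_le_mul_of_nonneg_right this (sq_nonneg ε)
      have key : MP * (B2 * τ) ^ 2 * ε ^ 2 / τ = MP * B2 ^ 2 * τ * ε ^ 2 := by
        field_simp
      have h2 : |P (deriv σ τ + ε * deriv f τ) - P (deriv σ τ) -
          ε * (deriv P (deriv σ τ) * deriv f τ)| / τ ≤ MP * B2 ^ 2 * τ * ε ^ 2 := by
        rw [← key]
        exact div_le_div₀ (mul_nonneg (mul_nonneg hMPpos.le (sq_nonneg _)) (sq_nonneg _))
          h1 hτ le_rfl
      have hble : σ τ ≤ S0 + 1 := (hσ_growth τ hτ0).trans (by linarith)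
      have h3 : (S0 + 1) ^ (-3 - 2 * μ) ≤ σ τ ^ (-3 - 2 * μ) :=
        Real.rpow_le_rpow_of_nonpos hbpos hble (by linarith)
      have hone : 1 ≤ (S0 + 1) ^ (3 + 2 * μ) * σ τ ^ (-3 - 2 * μ) := by
        have hid : (S0 + 1) ^ (3 + 2 * μ) * (S0 + 1) ^ (-3 - 2 * μ) = 1 := by
          rw [← Real.rpow_add hS0pos]
          norm_num
        calc (1 : ℝ) = (S0 + 1) ^ (3 + 2 * μ) * (S0 + 1) ^ (-3 - 2 * μ) := hid.symm
          _ ≤ (S0 + 1) ^ (3 + 2 * μ) * σ τ ^ (-3 - 2 * μ) :=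
            mul_le_mul_of_nonneg_left h3 (Real.rpow_nonneg hS0pos.le _)
      have hX : 0 ≤ MP * B2 ^ 2 * ε ^ 2 :=
        mul_nonneg (mul_nonneg hMPpos.le (sq_nonneg B2)) (sq_nonneg ε)
      calc |P (deriv σ τ + ε * deriv f τ) - P (deriv σ τ) -
            ε * (deriv P (deriv σ τ) * deriv f τ)| / τ
          ≤ MP * B2 ^ 2 * τ * ε ^ 2 := h2
        _ = (MP * B2 ^ 2 * ε ^ 2) * τ := by ring
        _ ≤ (MP * B2 ^ 2 * ε ^ 2) * 1 := mul_le_mul_of_nonneg_left hτ1 hX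
        _ ≤ (MP * B2 ^ 2 * ε ^ 2) * ((S0 + 1) ^ (3 + 2 * μ) * σ τ ^ (-3 - 2 * μ)) :=
            mul_le_mul_of_nonneg_left hone hX
        _ = c1 * (ε ^ 2 * σ τ ^ (-3 - 2 * μ)) := by rw [hc1_def]; ring
        _ ≤ (c1 + c2) * (ε ^ 2 * σ τ ^ (-3 - 2 * μ)) :=
            mul_le_mul_of_nonneg_right (by linarith) hεW
    · -- large τ
      have hsq : deriv f τ ^ 2 ≤ (K * σ τ ^ (-μ) / σ τ) ^ 2 := by
        rw [← sq_abs (deriv f τ)]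
        exact pow_le_pow_left₀ (abs_nonneg _) hu 2
      have h1 : |P (deriv σ τ + ε * deriv f τ) - P (deriv σ τ) -
          ε * (deriv P (deriv σ τ) * deriv f τ)| ≤
          MP * (K * σ τ ^ (-μ) / σ τ) ^ 2 * ε ^ 2 := by
        refine hT1.trans ?_
        have := mul_le_mul_of_nonneg_left hsq hMPpos.le
        exact mul_le_mul_of_nonneg_right this (sq_nonneg ε)
      have hτinv : 1 / τ ≤ (S0 + 1) / σ τ := by
        rw [div_le_div_iff₀ hτ hbpos]
        have hb' : σ τ ≤ S0 + τ := hσ_growth τ hτ0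
        have hS0τ : S0 ≤ S0 * τ := le_mul_of_one_le_right (by linarith) hτ1.le
        linarith
      have h2 : |P (deriv σ τ + ε * deriv f τ) - P (deriv σ τ) -
          ε * (deriv P (deriv σ τ) * deriv f τ)| / τ ≤
          (MP * (K * σ τ ^ (-μ) / σ τ) ^ 2 * ε ^ 2) * ((S0 + 1) / σ τ) := by
        rw [div_eq_mul_inv, ← one_div]
        refine mul_le_mul h1 hτinv (by positivity) ?_
        have : (0:ℝ) ≤ MP * (K * σ τ ^ (-μ) / σ τ) ^ 2 * ε ^ 2 := by
          refine mul_nonneg (mul_nonneg hMPpos.le (sq_nonneg _)) (sq_nonneg ε)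
        exact this
      have hEq : (MP * (K * σ τ ^ (-μ) / σ τ) ^ 2 * ε ^ 2) * ((S0 + 1) / σ τ) =
          c2 * (ε ^ 2 * (σ τ ^ (-μ) * σ τ ^ (-μ) / σ τ ^ 3)) := by
        rw [hc2_def]
        field_simp
      calc |P (deriv σ τ + ε * deriv f τ) - P (deriv σ τ) -
            ε * (deriv P (deriv σ τ) * deriv f τ)| / τ
          ≤ (MP * (K * σ τ ^ (-μ) / σ τ) ^ 2 * ε ^ 2) * ((S0 + 1) / σ τ) := h2
        _ = c2 * (ε ^ 2 * (σ τ ^ (-μ) * σ τ ^ (-μ) / σ τ ^ 3)) := hEq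
        _ = c2 * (ε ^ 2 * σ τ ^ (-3 - 2 * μ)) := by rw [hppb]
        _ ≤ (c1 + c2) * (ε ^ 2 * σ τ ^ (-3 - 2 * μ)) :=
            mul_le_mul_of_nonneg_right (by linarith) hεW
  -- final assembly
  have hT2' : |Q (deriv σ τ + ε * deriv f τ) / (σ τ + ε * f τ) - Q (deriv σ τ) / σ τ -
      ε * ((deriv Q (deriv σ τ) * deriv f τ * σ τ - Q (deriv σ τ) * f τ) / σ τ ^ 2)| ≤
      c3 * (ε ^ 2 * σ τ ^ (-3 - 2 * μ)) := by
    refine hT2.trans ?_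
    rw [hppb]
    ring_nf
    exact le_rfl
  calc |(P (deriv σ τ + ε * deriv f τ) - P (deriv σ τ) -
        ε * (deriv P (deriv σ τ) * deriv f τ)) / τ +
      (Q (deriv σ τ + ε * deriv f τ) / (σ τ + ε * f τ) - Q (deriv σ τ) / σ τ -
        ε * ((deriv Q (deriv σ τ) * deriv f τ * σ τ - Q (deriv σ τ) * f τ) / σ τ ^ 2))|
      ≤ |(P (deriv σ τ + ε * deriv f τ) - P (deriv σ τ) -
        ε * (deriv P (deriv σ τ) * deriv f τ)) / τ| +
      |Q (deriv σ τ + ε * deriv f τ) / (σ τ + ε * f τ) - Q (deriv σ τ) / σ τ -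
        ε * ((deriv Q (deriv σ τ) * deriv f τ * σ τ - Q (deriv σ τ) * f τ) / σ τ ^ 2)| :=
        abs_add_le _ _
    _ ≤ (c1 + c2) * (ε ^ 2 * σ τ ^ (-3 - 2 * μ)) + c3 * (ε ^ 2 * σ τ ^ (-3 - 2 * μ)) :=
        add_le_add hT1' hT2'
    _ = (c1 + c2 + c3) * (ε ^ 2 * σ τ ^ (-3 - 2 * μ)) := by ring
    _ ≤ (c1 + c2 + c3 + 1) * (ε ^ 2 * σ τ ^ (-3 - 2 * μ)) :=
        mul_le_mul_of_nonneg_right (by linarith) hεW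
    _ = (c1 + c2 + c3 + 1) * ε ^ 2 * σ τ ^ (-3 - 2 * μ) := by ring
end

section
/- Let μ > 0 and let σ̄ : ℝ → ℝ be C² with σ̄(τ) > |τ| and σ̄(τ) − τ·σ̄'(τ) > 0 for all τ ∈ ℝ. Suppose w₀ : {(ξ, ζ) ∈ ℝ² : ζ > |ξ|} → ℝ is twice differentiable and satisfies w₀(λ^{−1}τ, λ^{−1}σ̄(τ)) = λ^{−1−μ} for all λ > 0 and all τ ∈ ℝ. Then for all λ > 0 and τ ∈ ℝ, the Hessian of w₀ at (λ^{−1}τ, λ^{−1}σ̄(τ)) equals (1+μ)·λ^{1−μ}·(σ̄ − τσ̄')^{−3}·[ μ·(σ̄ − τσ̄')·(−σ̄', 1)⊗(−σ̄', 1) − σ̄''·(−σ̄, τ)⊗(−σ̄, τ) ], where σ̄, σ̄', σ̄'' are evaluated at τ and v⊗v denotes the rank-one matrix with entries v_i v_j. -/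
/-!
Put `p = λ⁻¹(τ, σ̄ τ)`, `u = (1, σ̄' τ)` (tangent to the leaf) and `v = (τ, σ̄ τ)` (tangent to
the dilations). Differentiating `w₀ (λ⁻¹(τ, σ̄ τ)) = λ^(-1-μ)` in `τ` and in `λ` gives
`Dw₀(p) u = 0` and `Dw₀(p) v = (1+μ) λ^(-μ)`. Differentiating these two identities once more in
`τ` and in `λ` determines the Hessian `A` on the basis `u, v`: `A(u,v) = A(v,u) = 0`,
`A(v,v) = μ(1+μ) λ^(1-μ)` and `A(u,u) = -(1+μ) λ^(1-μ) σ̄'' / (σ̄ - τσ̄')`, the last one because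
`u` itself moves with `τ`. Expressing the standard basis in `u, v`, whose determinant is
`σ̄ - τσ̄' > 0`, gives the formula.
-/

open scoped Topology

/-- The standard basis of `ℝ × ℝ`. -/
def e2 : Fin 2 → ℝ × ℝ := ![(1, 0), (0, 1)]

open Filter

section CurveDerivative

variable {E F G : Type*} [NormedAddCommGroup E] [NormedSpace ℝ E] [NormedAddCommGroup F]
  [NormedSpace ℝ F] [NormedAddCommGroup G] [NormedSpace ℝ G] {γ : ℝ → E} {γ' : E} {t : ℝ}

theorem HasFDerivAt.apply_eq_of_comp_eventuallyEq {f : E → F} {f' : E →L[ℝ] F} {g : ℝ → F}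
    {g' : F} (hf : HasFDerivAt f f' (γ t)) (hγ : HasDerivAt γ γ' t) (hg : HasDerivAt g g' t)
    (h : f ∘ γ =ᶠ[𝓝 t] g) : f' γ' = g' :=
  (hf.comp_hasDerivAt t hγ).unique (hg.congr_of_eventuallyEq h)

theorem HasFDerivAt.apply_apply_add_eq_of_eventuallyEq {f : E → G →L[ℝ] F}
    {f' : E →L[ℝ] G →L[ℝ] F} {u : ℝ → G} {u' : G} {g : ℝ → F} {g' : F}
    (hf : HasFDerivAt f f' (γ t)) (hγ : HasDerivAt γ γ' t) (hu : HasDerivAt u u' t)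
    (hg : HasDerivAt g g' t) (h : (fun s => f (γ s) (u s)) =ᶠ[𝓝 t] g) :
    f' γ' (u t) + f (γ t) u' = g' :=
  ((hf.comp_hasDerivAt t hγ).clm_apply hu).unique (hg.congr_of_eventuallyEq h)

end CurveDerivative

theorem ContinuousLinearMap.apply_e2_e2_of_orthogonal (B : ℝ × ℝ →L[ℝ] ℝ × ℝ →L[ℝ] ℝ)
    {a b c d : ℝ} (hD : a * d - b * c ≠ 0) (huv : B (a, b) (c, d) = 0)
    (hvu : B (c, d) (a, b) = 0) (i j : Fin 2) :
    B (e2 i) (e2 j) = (a * d - b * c)⁻¹ ^ 2 *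
      (![-d, c] i * ![-d, c] j * B (a, b) (a, b) + ![-b, a] i * ![-b, a] j * B (c, d) (c, d)) := by
  set D := a * d - b * c
  have he : ∀ k, e2 k = D⁻¹ • (![-b, a] k • (c, d) - ![-d, c] k • (a, b)) := by
    intro k
    rw [eq_inv_smul_iff₀ hD]
    fin_cases k <;> ext <;> simp [e2, D] <;> ring
  rw [he i, he j]
  simp only [map_sub, map_smul, sub_apply, smul_apply, smul_eq_mul, huv, hvu]
  ring

noncomputable def leafPoint (σ : ℝ → ℝ) (lam τ : ℝ) : ℝ × ℝ := lam⁻¹ • (τ, σ τ)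

section Leaf

variable {σ : ℝ → ℝ} {lam τ : ℝ}

theorem abs_fst_lt_snd_leafPoint (hσ : ∀ t, |t| < σ t) (hlam : 0 < lam) (τ : ℝ) :
    |(leafPoint σ lam τ).1| < (leafPoint σ lam τ).2 := by
  simp only [leafPoint, Prod.smul_mk, smul_eq_mul, abs_mul, abs_of_pos (inv_pos.2 hlam)]
  exact mul_lt_mul_of_pos_left (hσ τ) (inv_pos.2 hlam)

theorem hasDerivAt_leafPoint_right (hσ : DifferentiableAt ℝ σ τ) (lam : ℝ) :
    HasDerivAt (leafPoint σ lam) (lam⁻¹ • ((1 : ℝ), deriv σ τ)) τ :=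
  ((hasDerivAt_id τ).prodMk hσ.hasDerivAt).const_smul lam⁻¹

theorem hasDerivAt_leafPoint_left (hlam : lam ≠ 0) :
    HasDerivAt (fun l => leafPoint σ l τ) ((-(lam ^ 2)⁻¹) • (τ, σ τ)) lam :=
  (hasDerivAt_inv hlam).smul_const _

variable {μ : ℝ} {w : ℝ × ℝ → ℝ} (hleaf : ∀ l > 0, ∀ t, w (leafPoint σ l t) = l ^ (-1 - μ))
include hleaf

theorem fderiv_leafPoint_tangent (hσ : DifferentiableAt ℝ σ τ) (hlam : 0 < lam)
    (hw : DifferentiableAt ℝ w (leafPoint σ lam τ)) :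
    fderiv ℝ w (leafPoint σ lam τ) (1, deriv σ τ) = 0 := by
  have h := hw.hasFDerivAt.apply_eq_of_comp_eventuallyEq (hasDerivAt_leafPoint_right hσ lam)
    (hasDerivAt_const τ (lam ^ (-1 - μ))) (Eventually.of_forall (hleaf lam hlam))
  rw [map_smul, smul_eq_zero] at h
  exact h.resolve_left (inv_ne_zero hlam.ne')

theorem fderiv_leafPoint_position (hlam : 0 < lam)
    (hw : DifferentiableAt ℝ w (leafPoint σ lam τ)) :
    fderiv ℝ w (leafPoint σ lam τ) (τ, σ τ) = (1 + μ) * lam ^ (-μ) := by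
  have h := hw.hasFDerivAt.apply_eq_of_comp_eventuallyEq (t := lam)
    (hasDerivAt_leafPoint_left hlam.ne')
    (Real.hasDerivAt_rpow_const (x := lam) (p := -1 - μ) (Or.inl hlam.ne'))
    (by filter_upwards [eventually_gt_nhds hlam] with l hl using hleaf l hl τ)
  have hpow : lam ^ (-1 - μ - 1) = lam ^ (-μ) / lam ^ 2 := by
    rw [show -1 - μ - 1 = -μ - 2 by ring, Real.rpow_sub hlam, Real.rpow_two]
  rw [map_smul, smul_eq_mul, hpow] at h
  field_simp at h
  linarith

theorem fderiv_leafPoint_snd (hσ : DifferentiableAt ℝ σ τ) (hlam : 0 < lam)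
    (hD : σ τ - τ * deriv σ τ ≠ 0) (hw : DifferentiableAt ℝ w (leafPoint σ lam τ)) :
    fderiv ℝ w (leafPoint σ lam τ) (0, 1) = (1 + μ) * lam ^ (-μ) / (σ τ - τ * deriv σ τ) := by
  have hv : ((0 : ℝ), (1 : ℝ)) =
      (σ τ - τ * deriv σ τ)⁻¹ • ((τ, σ τ) - τ • ((1 : ℝ), deriv σ τ)) := by
    rw [eq_inv_smul_iff₀ hD]
    ext <;> simp
  rw [hv, map_smul, map_sub, map_smul, fderiv_leafPoint_position hleaf hlam hw,
    fderiv_leafPoint_tangent hleaf hσ hlam hw, smul_eq_mul, smul_zero, sub_zero, inv_mul_eq_div]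

variable (hdiff : ∀ l > 0, ∀ t, DifferentiableAt ℝ w (leafPoint σ l t))
  {A : ℝ × ℝ →L[ℝ] ℝ × ℝ →L[ℝ] ℝ} (hA : HasFDerivAt (fderiv ℝ w) A (leafPoint σ lam τ))
include hdiff hA

theorem hessian_leafPoint_position_tangent (hσ : DifferentiableAt ℝ σ τ) (hlam : 0 < lam) :
    A (τ, σ τ) (1, deriv σ τ) = 0 := by
  have h := hA.apply_apply_add_eq_of_eventuallyEq (t := lam) (hasDerivAt_leafPoint_left hlam.ne')
    (hasDerivAt_const lam ((1 : ℝ), deriv σ τ)) (hasDerivAt_const lam (0 : ℝ))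
    (by filter_upwards [eventually_gt_nhds hlam] with l hl using
      fderiv_leafPoint_tangent hleaf hσ hl (hdiff l hl τ))
  rw [map_zero, add_zero, map_smul, smul_apply, smul_eq_zero] at h
  exact h.resolve_left (by simp [hlam.ne'])

theorem hessian_leafPoint_tangent_position (hσ : Differentiable ℝ σ) (hlam : 0 < lam) :
    A (1, deriv σ τ) (τ, σ τ) = 0 := by
  have h := hA.apply_apply_add_eq_of_eventuallyEq (hasDerivAt_leafPoint_right (hσ τ) lam)
    ((hasDerivAt_id τ).prodMk (hσ τ).hasDerivAt) (hasDerivAt_const τ ((1 + μ) * lam ^ (-μ)))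
    (Eventually.of_forall fun t => fderiv_leafPoint_position hleaf hlam (hdiff lam hlam t))
  rw [fderiv_leafPoint_tangent hleaf (hσ τ) hlam (hdiff lam hlam τ), add_zero, map_smul,
    smul_apply, smul_eq_zero] at h
  exact h.resolve_left (inv_ne_zero hlam.ne')

theorem hessian_leafPoint_position_position (hlam : 0 < lam) :
    A (τ, σ τ) (τ, σ τ) = μ * (1 + μ) * lam ^ (1 - μ) := by
  have h := hA.apply_apply_add_eq_of_eventuallyEq (t := lam) (hasDerivAt_leafPoint_left hlam.ne')
    (hasDerivAt_const lam (τ, σ τ))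
    ((Real.hasDerivAt_rpow_const (x := lam) (p := -μ) (Or.inl hlam.ne')).const_mul (1 + μ))
    (by filter_upwards [eventually_gt_nhds hlam] with l hl using
      fderiv_leafPoint_position hleaf hl (hdiff l hl τ))
  have hpow : lam ^ (-μ - 1) = lam ^ (1 - μ) / lam ^ 2 := by
    rw [show -μ - 1 = 1 - μ - 2 by ring, Real.rpow_sub hlam, Real.rpow_two]
  rw [map_zero, add_zero, map_smul, smul_apply, smul_eq_mul, hpow] at h
  field_simp at h
  linarith

theorem hessian_leafPoint_tangent_tangent (hσ : Differentiable ℝ σ)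
    (hσ' : DifferentiableAt ℝ (deriv σ) τ) (hlam : 0 < lam) (hD : σ τ - τ * deriv σ τ ≠ 0) :
    A (1, deriv σ τ) (1, deriv σ τ) =
      -((1 + μ) * lam ^ (1 - μ) * deriv (deriv σ) τ / (σ τ - τ * deriv σ τ)) := by
  have h := hA.apply_apply_add_eq_of_eventuallyEq (hasDerivAt_leafPoint_right (hσ τ) lam)
    ((hasDerivAt_const τ (1 : ℝ)).prodMk hσ'.hasDerivAt) (hasDerivAt_const τ (0 : ℝ))
    (Eventually.of_forall fun t => fderiv_leafPoint_tangent hleaf (hσ t) hlam (hdiff lam hlam t))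
  have hv : ((0 : ℝ), deriv (deriv σ) τ) = deriv (deriv σ) τ • ((0 : ℝ), (1 : ℝ)) := by
    ext <;> simp
  simp only [hv, map_smul, smul_apply, smul_eq_mul] at h
  rw [fderiv_leafPoint_snd hleaf (hσ τ) hlam hD (hdiff lam hlam τ)] at h
  rw [sub_eq_add_neg, Real.rpow_add hlam, Real.rpow_one]
  field_simp at h ⊢
  linarith

end Leaf

theorem model_hessian_formula_general (μ : ℝ)
    (σb : ℝ → ℝ) (hσb_C2 : ContDiff ℝ 2 σb)
    (hσb_gt : ∀ τ : ℝ, |τ| < σb τ)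
    (hσb_trans : ∀ τ : ℝ, 0 < σb τ - τ * deriv σb τ)
    (w₀ : ℝ × ℝ → ℝ)
    (hw₀_diff : ∀ p : ℝ × ℝ, |p.1| < p.2 → DifferentiableAt ℝ w₀ p)
    (hw₀_diff2 : ∀ p : ℝ × ℝ, |p.1| < p.2 → DifferentiableAt ℝ (fderiv ℝ w₀) p)
    (hw₀_leaf : ∀ lam > (0 : ℝ), ∀ τ : ℝ,
      w₀ (lam⁻¹ * τ, lam⁻¹ * σb τ) = lam ^ (-1 - μ)) :
    ∀ lam > (0 : ℝ), ∀ τ : ℝ, ∀ i j : Fin 2,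
      fderiv ℝ (fun p => fderiv ℝ w₀ p (e2 i)) (lam⁻¹ * τ, lam⁻¹ * σb τ) (e2 j) =
        (1 + μ) * lam ^ (1 - μ) * (σb τ - τ * deriv σb τ)⁻¹ ^ 3 *
          (μ * (σb τ - τ * deriv σb τ) *
              (![-(deriv σb τ), 1] i * ![-(deriv σb τ), 1] j) -
            deriv (deriv σb) τ * (![-(σb τ), τ] i * ![-(σb τ), τ] j)) := by
  intro lam hlam τ i j
  have hσ : Differentiable ℝ σb := hσb_C2.differentiable (by norm_num)
  have hσ' := hσb_C2.differentiable_deriv_two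
  have hdiff l (hl : 0 < l) t : DifferentiableAt ℝ w₀ (leafPoint σb l t) :=
    hw₀_diff _ (abs_fst_lt_snd_leafPoint hσb_gt hl t)
  have hD := (hσb_trans τ).ne'
  have hA := (hw₀_diff2 _ (abs_fst_lt_snd_leafPoint hσb_gt hlam τ)).hasFDerivAt
  change fderiv ℝ (fun p => fderiv ℝ w₀ p (e2 i)) (leafPoint σb lam τ) (e2 j) = _
  rw [fderiv_clm_apply hA.differentiableAt (differentiableAt_const _)]
  simp only [fderiv_const_apply, ContinuousLinearMap.comp_zero, zero_add,
    ContinuousLinearMap.flip_apply]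
  rw [ContinuousLinearMap.apply_e2_e2_of_orthogonal _ (a := 1) (c := τ)
      (by linarith [hσb_trans τ])
      (hessian_leafPoint_tangent_position hw₀_leaf hdiff hA hσ hlam)
      (hessian_leafPoint_position_tangent hw₀_leaf hdiff hA (hσ τ) hlam),
    hessian_leafPoint_tangent_tangent hw₀_leaf hdiff hA hσ (hσ' τ) hlam hD,
    hessian_leafPoint_position_position hw₀_leaf hdiff hA hlam,
    show 1 * σb τ - deriv σb τ * τ = σb τ - τ * deriv σb τ by ring]
  field_simp
  ring

/-- **Hessian formula for the homogeneous model function.** If `w₀` is homogeneous of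
degree `1+μ` and equals `λ^(-1-μ)` on the dilated leaf `λ⁻¹·{(τ, σ̄(τ))}`, then at the
point `(λ⁻¹τ, λ⁻¹σ̄(τ))` its Hessian equals
`(1+μ)·λ^(1-μ)·(σ̄-τσ̄')⁻³·[μ(σ̄-τσ̄')(-σ̄',1)⊗(-σ̄',1) - σ̄''(-σ̄,τ)⊗(-σ̄,τ)]`. -/
theorem model_hessian_formula (μ : ℝ) (hμ : 0 < μ)
    (σb : ℝ → ℝ) (hσb_C2 : ContDiff ℝ 2 σb)
    (hσb_gt : ∀ τ : ℝ, |τ| < σb τ)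
    (hσb_trans : ∀ τ : ℝ, 0 < σb τ - τ * deriv σb τ)
    (w₀ : ℝ × ℝ → ℝ)
    (hw₀_diff : ∀ p : ℝ × ℝ, |p.1| < p.2 → DifferentiableAt ℝ w₀ p)
    (hw₀_diff2 : ∀ p : ℝ × ℝ, |p.1| < p.2 → DifferentiableAt ℝ (fderiv ℝ w₀) p)
    (hw₀_leaf : ∀ lam > (0 : ℝ), ∀ τ : ℝ,
      w₀ (lam⁻¹ * τ, lam⁻¹ * σb τ) = lam ^ (-1 - μ)) :
    ∀ lam > (0 : ℝ), ∀ τ : ℝ, ∀ i j : Fin 2,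
      fderiv ℝ (fun p => fderiv ℝ w₀ p (e2 i)) (lam⁻¹ * τ, lam⁻¹ * σb τ) (e2 j) =
        (1 + μ) * lam ^ (1 - μ) * (σb τ - τ * deriv σb τ)⁻¹ ^ 3 *
          (μ * (σb τ - τ * deriv σb τ) *
              (![-(deriv σb τ), 1] i * ![-(deriv σb τ), 1] j) -
            deriv (deriv σb) τ * (![-(σb τ), τ] i * ![-(σb τ), τ] j)) :=
  model_hessian_formula_general μ σb hσb_C2 hσb_gt hσb_trans w₀ hw₀_diff hw₀_diff2 hw₀_leaf
end

section
/- Let μ ∈ (0, 1/2) and let σ̄ : ℝ → ℝ be smooth, even, with σ̄'' > 0, σ̄(τ) > |τ| for all τ, and σ̄(τ) = τ + ā·τ^{−μ} + E(τ) for τ ≥ 1, where ā > 0, |E(τ)| ≤ K·τ^{−1/2} and |E'(τ)| ≤ K·τ^{−3/2}. Suppose w₀ : {(ξ, ζ) ∈ ℝ² : ζ > |ξ|} → ℝ is differentiable and satisfies w₀(λ^{−1}τ, λ^{−1}σ̄(τ)) = λ^{−1−μ} for all λ > 0, τ ∈ ℝ. Then there exists c ∈ (0,1) such that for all λ > 0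 and all τ ≥ 0: c·λ^{−μ}·σ̄(τ)^{μ} ≤ |∇w₀(λ^{−1}τ, λ^{−1}σ̄(τ))| ≤ c^{−1}·λ^{−μ}·σ̄(τ)^{μ}. In particular w₀ is locally Lipschitz. -/
open scoped Topology


lemma grad_formula (μ : ℝ) (σb : ℝ → ℝ) (hσb_diff : Differentiable ℝ σb)
    (hσb_gt : ∀ τ : ℝ, |τ| < σb τ)
    (w₀ : ℝ × ℝ → ℝ)
    (hw₀_diff : ∀ p : ℝ × ℝ, |p.1| < p.2 → DifferentiableAt ℝ w₀ p)
    (hw₀_leaf : ∀ lam > (0 : ℝ), ∀ τ : ℝ,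
      w₀ (lam⁻¹ * τ, lam⁻¹ * σb τ) = lam ^ (-1 - μ))
    (lam τ : ℝ) (hlam : 0 < lam) (hD : σb τ - τ * deriv σb τ ≠ 0) :
    fderiv ℝ w₀ (lam⁻¹ * τ, lam⁻¹ * σb τ) (0, 1)
        = (1 + μ) * lam ^ (-μ) / (σb τ - τ * deriv σb τ) ∧
    fderiv ℝ w₀ (lam⁻¹ * τ, lam⁻¹ * σb τ) (1, 0)
        = -(deriv σb τ) * ((1 + μ) * lam ^ (-μ) / (σb τ - τ * deriv σb τ)) := by
  have hσ0 : 0 < σb τ := lt_of_le_of_lt (abs_nonneg τ) (hσb_gt τ)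
  have hp : |(lam⁻¹ * τ, lam⁻¹ * σb τ).1| < (lam⁻¹ * τ, lam⁻¹ * σb τ).2 := by
    have : |lam⁻¹ * τ| = lam⁻¹ * |τ| := by
      rw [abs_mul, abs_of_pos (inv_pos.mpr hlam)]
    simpa [this] using (mul_lt_mul_of_pos_left (hσb_gt τ) (inv_pos.mpr hlam))
  set p : ℝ × ℝ := (lam⁻¹ * τ, lam⁻¹ * σb τ) with hpdef
  set L := fderiv ℝ w₀ p with hLdef
  have hL : HasFDerivAt w₀ L p := (hw₀_diff p hp).hasFDerivAt
  set a := L (1, 0) with hadef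
  set b := L (0, 1) with hbdef
  have hlin : ∀ x y : ℝ, L (x, y) = x * a + y * b := by
    intro x y
    have hxy : (x, y) = x • ((1 : ℝ), (0 : ℝ)) + y • ((0 : ℝ), (1 : ℝ)) := by
      simp [Prod.ext_iff]
    rw [hxy, map_add, map_smul, map_smul, smul_eq_mul, smul_eq_mul]
  -- equation 1 : differentiate along the leaf
  have hγ : HasDerivAt (fun t : ℝ => (lam⁻¹ * t, lam⁻¹ * σb t))
      (lam⁻¹, lam⁻¹ * deriv σb τ) τ := by
    exact ((hasDerivAt_id τ).const_mul lam⁻¹).prodMk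
      (((hσb_diff τ).hasDerivAt).const_mul lam⁻¹) |>.congr_deriv (by ring_nf)
  have hcomp1 : HasDerivAt (fun t : ℝ => w₀ (lam⁻¹ * t, lam⁻¹ * σb t))
      (L (lam⁻¹, lam⁻¹ * deriv σb τ)) τ := hL.comp_hasDerivAt τ hγ
  have hconst : (fun t : ℝ => w₀ (lam⁻¹ * t, lam⁻¹ * σb t)) = fun _ => lam ^ (-1 - μ) :=
    funext fun t => hw₀_leaf lam hlam t
  have heq1 : L (lam⁻¹, lam⁻¹ * deriv σb τ) = 0 := by
    have := hcomp1
    rw [hconst] at this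
    exact this.unique (hasDerivAt_const τ _)
  -- equation 2 : differentiate along the ray
  have hs₀ : (0 : ℝ) < lam⁻¹ := inv_pos.mpr hlam
  have hδ : HasDerivAt (fun s : ℝ => (s * τ, s * σb τ)) (τ, σb τ) lam⁻¹ :=
    ((hasDerivAt_id lam⁻¹).mul_const τ).prodMk ((hasDerivAt_id lam⁻¹).mul_const (σb τ))
      |>.congr_deriv (by simp)
  have hcomp2 : HasDerivAt (fun s : ℝ => w₀ (s * τ, s * σb τ)) (L (τ, σb τ)) lam⁻¹ :=
    hL.comp_hasDerivAt lam⁻¹ hδ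
  have hev : (fun s : ℝ => w₀ (s * τ, s * σb τ)) =ᶠ[nhds lam⁻¹]
      fun s : ℝ => s ^ (1 + μ) := by
    filter_upwards [eventually_gt_nhds hs₀] with s hs
    have h1 := hw₀_leaf s⁻¹ (inv_pos.mpr hs) τ
    rw [inv_inv] at h1
    rw [h1, Real.inv_rpow hs.le, ← Real.rpow_neg hs.le]
    norm_num [add_comm]
  have hpow : HasDerivAt (fun s : ℝ => s ^ (1 + μ)) ((1 + μ) * (lam⁻¹) ^ μ) lam⁻¹ := by
    have := Real.hasDerivAt_rpow_const (x := lam⁻¹) (p := 1 + μ) (Or.inl (ne_of_gt hs₀))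
    simpa [add_sub_cancel_left] using this
  have heq2 : L (τ, σb τ) = (1 + μ) * lam ^ (-μ) := by
    have h2 : HasDerivAt (fun s : ℝ => s ^ (1 + μ)) (L (τ, σb τ)) lam⁻¹ :=
      hcomp2.congr_of_eventuallyEq hev.symm
    have := h2.unique hpow
    rw [this, Real.inv_rpow hlam.le, ← Real.rpow_neg hlam.le]
  rw [hlin] at heq1 heq2
  have hlam' : lam⁻¹ ≠ 0 := ne_of_gt hs₀
  field_simp at heq1
  have ha : a = -(deriv σb τ) * b := by linarith
  have hb : b = (1 + μ) * lam ^ (-μ) / (σb τ - τ * deriv σb τ) := by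
    rw [eq_div_iff hD]
    rw [ha] at heq2
    linear_combination heq2
  exact ⟨hb, by rw [ha, hb]⟩
lemma sigma_props (μ : ℝ) (hμ : 0 < μ) (σb : ℝ → ℝ) (hσb_smooth : ContDiff ℝ (⊤ : ℕ∞) σb)
    (hσb_even : ∀ τ, σb (-τ) = σb τ)
    (hσb_conv : ∀ τ, 0 < deriv (deriv σb) τ)
    (hσb_gt : ∀ τ : ℝ, |τ| < σb τ)
    (abar K : ℝ) (habar : 0 < abar) (hK : 0 < K)
    (hub : ∀ τ : ℝ, 1 ≤ τ → σb τ ≤ τ + abar + K) :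
    (∀ τ, deriv σb τ < 1) ∧ (∀ τ, deriv σb (-τ) = -deriv σb τ) ∧
      (∀ τ, 0 ≤ τ → 0 ≤ deriv σb τ) ∧ (∀ τ, 0 < σb τ - τ * deriv σb τ) := by
  have hsm2 : ContDiff ℝ (⊤ : ℕ∞) σb := hσb_smooth.of_le (by simp)
  have hdiff : Differentiable ℝ σb := hsm2.differentiable (by simp)
  have hdiff' : Differentiable ℝ (deriv σb) :=
    ((contDiff_infty_iff_deriv.mp hsm2).2).differentiable (by simp)
  have hmono : StrictMono (deriv σb) := strictMono_of_deriv_pos hσb_conv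
  have hslope : ∀ τ t : ℝ, τ < t → deriv σb τ * (t - τ) < σb t - σb τ := by
    intro τ t hτt
    obtain ⟨c, hc, hc2⟩ := exists_hasDerivAt_eq_slope σb (deriv σb) hτt
      (hdiff.continuous.continuousOn) (fun x _ => (hdiff x).hasDerivAt)
    have h1 : deriv σb τ < deriv σb c := hmono hc.1
    have h2 : (σb t - σb τ) = deriv σb c * (t - τ) := by
      rw [hc2, div_mul_cancel₀ _ (ne_of_gt (sub_pos.mpr hτt))]
    nlinarith [sub_pos.mpr hτt]
  have hle : ∀ s : ℝ, deriv σb s ≤ 1 := by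
    intro s
    by_contra h
    push_neg at h
    set δ := deriv σb s - 1 with hδdef
    have hδ0 : 0 < δ := by simp only [hδdef]; linarith
    set C := s + abar + K - σb s with hC
    set t := max 1 (s + (|C| + 1) / δ) with ht
    have hts : s < t := lt_of_lt_of_le (lt_add_of_pos_right s (by positivity)) (le_max_right _ _)
    have ht1 : 1 ≤ t := le_max_left _ _
    have h1 : deriv σb s * (t - s) < σb t - σb s := hslope s t hts
    have h2 : σb t ≤ t + abar + K := hub t ht1
    have h3 : (|C| + 1) / δ ≤ t - s := by
      have := le_max_right 1 (s + (|C| + 1) / δ)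
      simp only [ht]; linarith [this]
    have h4 : |C| + 1 ≤ δ * (t - s) := by
      rw [div_le_iff₀ hδ0] at h3; linarith [h3]
    have h5 : C ≤ |C| := le_abs_self C
    nlinarith [sub_pos.mpr hts]
  have hlt : ∀ τ, deriv σb τ < 1 :=
    fun τ => lt_of_lt_of_le (hmono (by linarith : τ < τ + 1)) (hle (τ + 1))
  have hodd : ∀ τ, deriv σb (-τ) = -deriv σb τ := by
    intro τ
    have : deriv (fun x => σb (-x)) τ = -deriv σb (-τ) := deriv_comp_neg σb τ
    rw [funext hσb_even] at this
    linarith [this]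
  have h0 : deriv σb 0 = 0 := by
    have := hodd 0
    simp at this
    linarith [this]
  have hnn : ∀ τ, 0 ≤ τ → 0 ≤ deriv σb τ := by
    intro τ hτ
    rcases eq_or_lt_of_le hτ with h | h
    · rw [← h, h0]
    · exact le_of_lt (h0 ▸ hmono h)
  have hDnn : ∀ τ, 0 ≤ τ → 0 < σb τ - τ * deriv σb τ := by
    intro τ hτ
    have h1 := hσb_gt τ
    rw [abs_of_nonneg hτ] at h1
    nlinarith [hlt τ, hnn τ hτ]
  refine ⟨hlt, hodd, hnn, fun τ => ?_⟩
  rcases le_or_gt 0 τ with h | h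
  · exact hDnn τ h
  · have := hDnn (-τ) (by linarith)
    rw [hσb_even, hodd] at this
    linarith [this]
lemma D_asym (μ : ℝ) (hμ : 0 < μ) (hμ' : μ < 1 / 2) (σb : ℝ → ℝ)
    (hdiff : Differentiable ℝ σb)
    (abar K : ℝ) (habar : 0 < abar) (hK : 0 < K)
    (hσb_asym : ∀ τ : ℝ, 1 ≤ τ →
      |σb τ - τ - abar * τ ^ (-μ)| ≤ K * τ ^ (-(1 : ℝ) / 2) ∧
      |deriv (fun t => σb t - t - abar * t ^ (-μ)) τ| ≤ K * τ ^ (-(3 : ℝ) / 2)) :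
    ∃ T₁ : ℝ, 1 ≤ T₁ ∧ ∀ τ : ℝ, T₁ ≤ τ →
      (1 / 2) * ((1 + μ) * abar) * τ ^ (-μ) ≤ σb τ - τ * deriv σb τ ∧
      σb τ - τ * deriv σb τ ≤ 2 * ((1 + μ) * abar) * τ ^ (-μ) := by
  set B := 4 * K / ((1 + μ) * abar) with hB
  have hBpos : 0 < B := by positivity
  refine ⟨max 1 (B ^ (((1:ℝ)/2 - μ)⁻¹)), le_max_left _ _, fun τ hτ => ?_⟩
  have hτ1 : (1:ℝ) ≤ τ := le_trans (le_max_left _ _) hτ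
  have hτ0 : (0:ℝ) < τ := lt_of_lt_of_le one_pos hτ1
  -- the error term bound
  obtain ⟨hE, hE'⟩ := hσb_asym τ hτ1
  -- derivative identity
  have hrpow : HasDerivAt (fun t : ℝ => t ^ (-μ)) (-μ * τ ^ (-μ - 1)) τ :=
    Real.hasDerivAt_rpow_const (Or.inl hτ0.ne')
  have hder : deriv (fun t => σb t - t - abar * t ^ (-μ)) τ
      = deriv σb τ - 1 - abar * (-μ * τ ^ (-μ - 1)) :=
    (((hdiff τ).hasDerivAt.sub (hasDerivAt_id τ)).sub (hrpow.const_mul abar)).deriv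
  rw [hder] at hE'
  -- rpow arithmetic
  have hmul1 : τ * τ ^ (-μ - 1) = τ ^ (-μ) := by
    nth_rewrite 1 [← Real.rpow_one τ]
    rw [← Real.rpow_add hτ0]; norm_num
  have hmul2 : τ * τ ^ (-(3:ℝ)/2) = τ ^ (-(1:ℝ)/2) := by
    nth_rewrite 1 [← Real.rpow_one τ]
    rw [← Real.rpow_add hτ0]; norm_num
  have hmul3 : τ ^ (-μ) = τ ^ (-(1:ℝ)/2) * τ ^ ((1:ℝ)/2 - μ) := by
    rw [← Real.rpow_add hτ0]; ring_nf
  -- τ^(1/2-μ) ≥ B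
  have hBle : B ≤ τ ^ ((1:ℝ)/2 - μ) := by
    have h1 : B ^ (((1:ℝ)/2 - μ)⁻¹) ≤ τ := le_trans (le_max_right _ _) hτ
    have h2 : (B ^ (((1:ℝ)/2 - μ)⁻¹)) ^ ((1:ℝ)/2 - μ) ≤ τ ^ ((1:ℝ)/2 - μ) :=
      Real.rpow_le_rpow (by positivity) h1 (by linarith)
    rwa [← Real.rpow_mul hBpos.le, inv_mul_cancel₀ (by linarith : (1:ℝ)/2 - μ ≠ 0),
      Real.rpow_one] at h2
  have hhalf : 2 * K * τ ^ (-(1:ℝ)/2) ≤ (1/2) * ((1 + μ) * abar) * τ ^ (-μ) := by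
    have hp : (0:ℝ) < τ ^ (-(1:ℝ)/2) := Real.rpow_pos_of_pos hτ0 _
    have h3 : (1/2) * ((1+μ)*abar) * B = 2 * K := by
      rw [hB]; field_simp; ring
    calc 2 * K * τ ^ (-(1:ℝ)/2) = ((1/2) * ((1+μ)*abar) * B) * τ ^ (-(1:ℝ)/2) := by
          rw [h3]
      _ ≤ ((1/2) * ((1+μ)*abar) * τ ^ ((1:ℝ)/2 - μ)) * τ ^ (-(1:ℝ)/2) := by
          apply mul_le_mul_of_nonneg_right _ hp.le
          exact mul_le_mul_of_nonneg_left hBle (by positivity)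
      _ = (1/2) * ((1 + μ) * abar) * τ ^ (-μ) := by rw [hmul3]; ring
  -- decomposition of D
  set E := σb τ - τ - abar * τ ^ (-μ) with hEdef
  set E' := deriv σb τ - 1 - abar * (-μ * τ ^ (-μ - 1)) with hE'def
  have hDdec : σb τ - τ * deriv σb τ = (1 + μ) * abar * τ ^ (-μ) + (E - τ * E') := by
    simp only [hEdef, hE'def]
    linear_combination (μ * abar) * hmul1
  have habs : |E - τ * E'| ≤ 2 * K * τ ^ (-(1:ℝ)/2) := by
    calc |E - τ * E'| ≤ |E| + |τ * E'| := abs_sub _ _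
      _ ≤ K * τ ^ (-(1:ℝ)/2) + τ * (K * τ ^ (-(3:ℝ)/2)) := by
          rw [abs_mul, abs_of_pos hτ0]
          exact add_le_add hE (mul_le_mul_of_nonneg_left hE' hτ0.le)
      _ = 2 * K * τ ^ (-(1:ℝ)/2) := by rw [show τ * (K * τ ^ (-(3:ℝ)/2)) = K * (τ * τ ^ (-(3:ℝ)/2)) by ring, hmul2]; ring
  rw [hDdec]
  rw [abs_le] at habs
  constructor <;> nlinarith [habs.1, habs.2, hhalf]
lemma surj_leaf (σb : ℝ → ℝ) (hcont : Continuous σb)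
    (hσb_even : ∀ τ, σb (-τ) = σb τ)
    (hσb_gt : ∀ τ : ℝ, |τ| < σb τ)
    (abar K : ℝ)
    (hub : ∀ τ : ℝ, 1 ≤ τ → σb τ ≤ τ + abar + K) :
    ∀ q : ℝ × ℝ, |q.1| < q.2 → ∃ lam τ : ℝ, 0 < lam ∧
      q.1 = lam⁻¹ * τ ∧ q.2 = lam⁻¹ * σb τ := by
  have key : ∀ x y : ℝ, 0 ≤ x → x < y → ∃ τ₀ : ℝ, x * σb τ₀ = τ₀ * y := by
    intro x y hx hxy
    set G := fun τ : ℝ => τ * y - x * σb τ with hG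
    have hGc : Continuous G := by
      exact (continuous_id.mul continuous_const).sub (continuous_const.mul hcont)
    set T := max 1 ((x * (abar + K) + 1) / (y - x)) with hT
    have hT1 : (1:ℝ) ≤ T := le_max_left _ _
    have hGT : 1 ≤ G T := by
      have h1 := hub T hT1
      have h2 : (x * (abar + K) + 1) / (y - x) ≤ T := le_max_right _ _
      rw [div_le_iff₀ (by linarith)] at h2
      simp only [hG]
      nlinarith [mul_le_mul_of_nonneg_left h1 hx]
    have hσ0 : 0 < σb 0 := lt_of_le_of_lt (abs_nonneg 0) (hσb_gt 0)
    have hG0 : G 0 ≤ 0 := by simp only [hG]; nlinarith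
    have hsub := intermediate_value_Icc (le_trans zero_le_one hT1) hGc.continuousOn
    obtain ⟨τ₀, _, hτ₀⟩ := hsub ⟨hG0, by linarith⟩
    exact ⟨τ₀, by simp only [hG] at hτ₀; linarith⟩
  intro q hq
  have hq2 : 0 < q.2 := lt_of_le_of_lt (abs_nonneg _) hq
  rcases le_or_gt 0 q.1 with h | h
  · obtain ⟨τ₀, hτ₀⟩ := key q.1 q.2 h (lt_of_abs_lt hq)
    have hσ : 0 < σb τ₀ := lt_of_le_of_lt (abs_nonneg _) (hσb_gt τ₀)
    refine ⟨σb τ₀ / q.2, τ₀, by positivity, ?_, ?_⟩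
    · rw [inv_div]; rw [div_mul_eq_mul_div, eq_div_iff (ne_of_gt hσ)]; linarith
    · rw [inv_div]; field_simp
  · obtain ⟨τ₀, hτ₀⟩ := key (-q.1) q.2 (by linarith) (by linarith [(abs_lt.mp hq).1])
    have hσ : 0 < σb τ₀ := lt_of_le_of_lt (abs_nonneg _) (hσb_gt τ₀)
    refine ⟨σb τ₀ / q.2, -τ₀, by positivity, ?_, ?_⟩
    · rw [inv_div]; rw [div_mul_eq_mul_div, eq_div_iff (ne_of_gt hσ)]; linarith
    · rw [inv_div, hσb_even]; field_simp

lemma opnorm_pair (L : ℝ × ℝ →L[ℝ] ℝ) (b d : ℝ) (hb : 0 < b) (hd : |d| ≤ 1)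
    (h1 : L (1, 0) = -d * b) (h2 : L (0, 1) = b) : ‖L‖ ≤ 2 * b := by
  apply ContinuousLinearMap.opNorm_le_bound _ (by positivity)
  intro v
  have hlin : ∀ x y : ℝ, L (x, y) = x * L (1, 0) + y * L (0, 1) := by
    intro x y
    have hxy : (x, y) = x • ((1 : ℝ), (0 : ℝ)) + y • ((0 : ℝ), (1 : ℝ)) := by
      simp [Prod.ext_iff]
    rw [hxy, map_add, map_smul, map_smul, smul_eq_mul, smul_eq_mul]
  have hv : L v = v.1 * L (1, 0) + v.2 * L (0, 1) := by
    conv_lhs => rw [← Prod.mk.eta (p := v)]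
    exact hlin v.1 v.2
  rw [Real.norm_eq_abs, hv, h1, h2]
  have hv1 : |v.1| ≤ ‖v‖ := by rw [Prod.norm_def]; exact le_max_left _ _
  have hv2 : |v.2| ≤ ‖v‖ := by rw [Prod.norm_def]; exact le_max_right _ _
  calc |v.1 * (-d * b) + v.2 * b| ≤ |v.1 * (-d * b)| + |v.2 * b| := abs_add_le _ _
    _ = |v.1| * (|d| * b) + |v.2| * b := by
        rw [abs_mul, abs_mul, abs_mul, abs_neg, abs_of_pos hb]
    _ ≤ ‖v‖ * (1 * b) + ‖v‖ * b := by
        apply add_le_add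
        · exact mul_le_mul hv1 (mul_le_mul_of_nonneg_right hd hb.le) (by positivity)
            (norm_nonneg v)
        · exact mul_le_mul_of_nonneg_right hv2 hb.le
    _ = 2 * b * ‖v‖ := by ring

lemma sandwich_bound (μ c Mψ mψ X S Dv R : ℝ)
    (hcpos : 0 < c) (hX : 0 < X) (hS : 0 < S) (hD : 0 < Dv)
    (hμ0 : 0 ≤ μ) (hμ2 : μ ≤ 1)
    (hMu : Dv * S ≤ Mψ) (hml : mψ ≤ Dv * S)
    (hcM : c * Mψ ≤ 1) (hcm : 3 ≤ c⁻¹ * mψ)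
    (hR1 : 1 ≤ R) (hR2 : R ≤ 3/2) :
    c * X * S ≤ (1 + μ) * X / Dv * R ∧ (1 + μ) * X / Dv * R ≤ c⁻¹ * X * S := by
  have hcinv : 0 < c⁻¹ := inv_pos.mpr hcpos
  constructor
  · rw [show (1 + μ) * X / Dv * R = ((1 + μ) * X * R) / Dv by ring, le_div_iff₀ hD]
    nlinarith [mul_le_mul_of_nonneg_left hMu (mul_pos hcpos hX).le,
      mul_le_mul_of_nonneg_left hcM hX.le,
      mul_le_mul_of_nonneg_left hR1 (mul_pos (show (0:ℝ) < 1 + μ by linarith) hX).le,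
      mul_le_mul_of_nonneg_right hμ0 hX.le]
  · rw [show (1 + μ) * X / Dv * R = ((1 + μ) * X * R) / Dv by ring, div_le_iff₀ hD]
    nlinarith [mul_le_mul_of_nonneg_left hR2 (mul_pos (show (0:ℝ) < 1 + μ by linarith) hX).le,
      mul_le_mul_of_nonneg_left hml (mul_pos hcinv hX).le,
      mul_le_mul_of_nonneg_right hcm hX.le,
      mul_le_mul_of_nonneg_right hμ2 hX.le]


/-- **Gradient bounds for the homogeneous model function.** With
`σ̄(τ) = τ + ā τ^(-μ) + E(τ)`, `ā > 0`, the Euclidean norm of the gradient of the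
degree-`(1+μ)` homogeneous function `w₀` at `(λ⁻¹τ, λ⁻¹σ̄(τ))` is comparable to
`λ^(-μ) σ̄(τ)^μ`; in particular `w₀` is locally Lipschitz on `{ζ > |ξ|}`. -/
theorem model_gradient_bounds (μ : ℝ) (hμ : 0 < μ) (hμ' : μ < 1 / 2)
    (σb : ℝ → ℝ) (hσb_smooth : ContDiff ℝ (⊤ : ℕ∞) σb)
    (hσb_even : ∀ τ, σb (-τ) = σb τ)
    (hσb_conv : ∀ τ, 0 < deriv (deriv σb) τ)
    (hσb_gt : ∀ τ : ℝ, |τ| < σb τ)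
    (abar K : ℝ) (habar : 0 < abar) (hK : 0 < K)
    (hσb_asym : ∀ τ : ℝ, 1 ≤ τ →
      |σb τ - τ - abar * τ ^ (-μ)| ≤ K * τ ^ (-(1 : ℝ) / 2) ∧
      |deriv (fun t => σb t - t - abar * t ^ (-μ)) τ| ≤ K * τ ^ (-(3 : ℝ) / 2))
    (w₀ : ℝ × ℝ → ℝ)
    (hw₀_diff : ∀ p : ℝ × ℝ, |p.1| < p.2 → DifferentiableAt ℝ w₀ p)
    (hw₀_leaf : ∀ lam > (0 : ℝ), ∀ τ : ℝ,
      w₀ (lam⁻¹ * τ, lam⁻¹ * σb τ) = lam ^ (-1 - μ)) :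
    (∃ c : ℝ, 0 < c ∧ c < 1 ∧ ∀ lam > (0 : ℝ), ∀ τ : ℝ, 0 ≤ τ →
      c * lam ^ (-μ) * σb τ ^ μ ≤
        Real.sqrt (fderiv ℝ w₀ (lam⁻¹ * τ, lam⁻¹ * σb τ) (1, 0) ^ 2 +
          fderiv ℝ w₀ (lam⁻¹ * τ, lam⁻¹ * σb τ) (0, 1) ^ 2) ∧
      Real.sqrt (fderiv ℝ w₀ (lam⁻¹ * τ, lam⁻¹ * σb τ) (1, 0) ^ 2 +
          fderiv ℝ w₀ (lam⁻¹ * τ, lam⁻¹ * σb τ) (0, 1) ^ 2) ≤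
        c⁻¹ * lam ^ (-μ) * σb τ ^ μ) ∧
    (∀ p : ℝ × ℝ, |p.1| < p.2 → ∃ (L : NNReal) (ε : ℝ), 0 < ε ∧
      LipschitzOnWith L w₀ (Metric.ball p ε ∩ {q : ℝ × ℝ | |q.1| < q.2})) := by
  have hsm2 : ContDiff ℝ (⊤ : ℕ∞) σb := hσb_smooth.of_le (by simp)
  have hdiff : Differentiable ℝ σb := hsm2.differentiable (by simp)
  have hdiff' : Differentiable ℝ (deriv σb) :=
    ((contDiff_infty_iff_deriv.mp hsm2).2).differentiable (by simp)
  have hσpos : ∀ τ, 0 < σb τ := fun τ => lt_of_le_of_lt (abs_nonneg τ) (hσb_gt τ)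
  have hub : ∀ τ : ℝ, 1 ≤ τ → σb τ ≤ τ + abar + K := by
    intro τ hτ
    have h := (hσb_asym τ hτ).1
    have h1 : τ ^ (-μ) ≤ 1 := Real.rpow_le_one_of_one_le_of_nonpos hτ (by linarith)
    have h2 : τ ^ (-(1:ℝ)/2) ≤ 1 := Real.rpow_le_one_of_one_le_of_nonpos hτ (by norm_num)
    have h3 := (abs_le.mp h).2
    nlinarith [mul_le_mul_of_nonneg_left h1 habar.le, mul_le_mul_of_nonneg_left h2 hK.le]
  obtain ⟨hσ'lt, hσ'odd, hσ'nn, hDpos⟩ :=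
    sigma_props μ hμ σb hσb_smooth hσb_even hσb_conv hσb_gt abar K habar hK hub
  obtain ⟨T₁, hT₁1, hT₁⟩ := D_asym μ hμ hμ' σb hdiff abar K habar hK hσb_asym
  have hψc : Continuous (fun τ : ℝ => (σb τ - τ * deriv σb τ) * σb τ ^ μ) := by
    exact ((hdiff.continuous).sub (continuous_id.mul hdiff'.continuous)).mul
      (hdiff.continuous.rpow_const (fun τ => Or.inr hμ.le))
  have hψpos : ∀ τ : ℝ, 0 < (σb τ - τ * deriv σb τ) * σb τ ^ μ :=
    fun τ => mul_pos (hDpos τ) (Real.rpow_pos_of_pos (hσpos τ) μ)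
  have hψeven : ∀ τ : ℝ, (σb (-τ) - (-τ) * deriv σb (-τ)) * σb (-τ) ^ μ
      = (σb τ - τ * deriv σb τ) * σb τ ^ μ := by
    intro τ; rw [hσb_even, hσ'odd]; ring
  have hne : (Set.Icc (0:ℝ) T₁).Nonempty := ⟨0, le_refl _, by linarith⟩
  obtain ⟨τm, _, hτm⟩ := (isCompact_Icc : IsCompact (Set.Icc (0:ℝ) T₁)).exists_isMinOn
    hne hψc.continuousOn
  obtain ⟨τM, _, hτM⟩ := (isCompact_Icc : IsCompact (Set.Icc (0:ℝ) T₁)).exists_isMaxOn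
    hne hψc.continuousOn
  set mψ := min ((σb τm - τm * deriv σb τm) * σb τm ^ μ) ((1/2)*((1+μ)*abar)) with hmdef
  set Mψ := max ((σb τM - τM * deriv σb τM) * σb τM ^ μ)
    (2*((1+μ)*abar)*(1+abar+K) ^ μ) with hMdef
  have hmpos : 0 < mψ := lt_min (hψpos τm) (by positivity)
  have hMpos : 0 < Mψ := lt_of_lt_of_le (by positivity : (0:ℝ) < 2*((1+μ)*abar)*(1+abar+K) ^ μ)
    (le_max_right _ _)
  have hψbound : ∀ τ : ℝ, 0 ≤ τ →
      mψ ≤ (σb τ - τ * deriv σb τ) * σb τ ^ μ ∧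
      (σb τ - τ * deriv σb τ) * σb τ ^ μ ≤ Mψ := by
    intro τ hτ
    rcases le_or_gt τ T₁ with h | h
    · exact ⟨le_trans (min_le_left _ _) (isMinOn_iff.mp hτm τ ⟨hτ, h⟩),
        le_trans (isMaxOn_iff.mp hτM τ ⟨hτ, h⟩) (le_max_left _ _)⟩
    · obtain ⟨hD1, hD2⟩ := hT₁ τ h.le
      have hτ1 : (1:ℝ) ≤ τ := le_trans hT₁1 h.le
      have hτ0 : (0:ℝ) < τ := by linarith
      have hσl : τ ^ μ ≤ σb τ ^ μ :=
        Real.rpow_le_rpow hτ0.le (le_trans (le_abs_self τ) (hσb_gt τ).le) hμ.le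
      have hσu : σb τ ^ μ ≤ (1+abar+K) ^ μ * τ ^ μ := by
        rw [← Real.mul_rpow (by positivity) hτ0.le]
        apply Real.rpow_le_rpow (hσpos τ).le _ hμ.le
        nlinarith [hub τ hτ1]
      have hcancel : τ ^ (-μ) * τ ^ μ = 1 := by
        rw [← Real.rpow_add hτ0]; simp
      constructor
      · apply le_trans (min_le_right _ _)
        calc (1/2)*((1+μ)*abar) = ((1/2)*((1+μ)*abar) * τ ^ (-μ)) * τ ^ μ := by
              rw [show ((1/2)*((1+μ)*abar) * τ ^ (-μ)) * τ ^ μ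
                = (1/2)*((1+μ)*abar) * (τ ^ (-μ) * τ ^ μ) by ring, hcancel, mul_one]
          _ ≤ (σb τ - τ * deriv σb τ) * σb τ ^ μ :=
              mul_le_mul hD1 hσl (Real.rpow_nonneg hτ0.le μ) (hDpos τ).le
      · apply le_trans _ (le_max_right _ _)
        calc (σb τ - τ * deriv σb τ) * σb τ ^ μ
            ≤ (2*((1+μ)*abar) * τ ^ (-μ)) * ((1+abar+K) ^ μ * τ ^ μ) :=
              mul_le_mul hD2 hσu (Real.rpow_pos_of_pos (hσpos τ) μ).le
                (mul_nonneg (by positivity) (Real.rpow_nonneg hτ0.le _))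
          _ = 2*((1+μ)*abar)*(1+abar+K) ^ μ * (τ ^ (-μ) * τ ^ μ) := by ring
          _ = 2*((1+μ)*abar)*(1+abar+K) ^ μ := by rw [hcancel, mul_one]
  have hψlow : ∀ τ : ℝ, mψ ≤ (σb τ - τ * deriv σb τ) * σb τ ^ μ := by
    intro τ
    rcases le_or_gt 0 τ with h | h
    · exact (hψbound τ h).1
    · have h2 := (hψbound (-τ) (by linarith)).1
      rwa [hψeven] at h2
  clear_value mψ Mψ
  set c := min (min (1/2) Mψ⁻¹) (mψ/3) with hcdef
  have hcpos : 0 < c := lt_min (lt_min one_half_pos (inv_pos.mpr hMpos)) (by positivity)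
  have hc1 : c < 1 :=
    lt_of_le_of_lt (le_trans (min_le_left _ _) (min_le_left _ _)) one_half_lt_one
  have hcM : c * Mψ ≤ 1 := by
    have h1 : c ≤ Mψ⁻¹ := le_trans (min_le_left _ _) (min_le_right _ _)
    calc c * Mψ ≤ Mψ⁻¹ * Mψ := mul_le_mul_of_nonneg_right h1 hMpos.le
      _ = 1 := inv_mul_cancel₀ (ne_of_gt hMpos)
  have hcm : 3 ≤ c⁻¹ * mψ := by
    have h1 : c ≤ mψ/3 := min_le_right _ _
    have h2 : (mψ/3)⁻¹ ≤ c⁻¹ := by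
      apply inv_anti₀ hcpos h1
    calc (3:ℝ) = (mψ/3)⁻¹ * mψ := by field_simp
      _ ≤ c⁻¹ * mψ := mul_le_mul_of_nonneg_right h2 hmpos.le
  clear_value c
  constructor
  · refine ⟨c, hcpos, hc1, ?_⟩
    intro lam hlam τ hτ
    obtain ⟨hbf, haf⟩ := grad_formula μ σb hdiff hσb_gt w₀ hw₀_diff hw₀_leaf lam τ hlam
      (ne_of_gt (hDpos τ))
    rw [haf, hbf]
    have hDτ : 0 < σb τ - τ * deriv σb τ := hDpos τ
    have hXpos : 0 < lam ^ (-μ) := Real.rpow_pos_of_pos hlam _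
    have hbpos : 0 < (1 + μ) * lam ^ (-μ) / (σb τ - τ * deriv σb τ) := by positivity
    have hs0 : 0 ≤ deriv σb τ := hσ'nn τ hτ
    have hs1 : deriv σb τ < 1 := hσ'lt τ
    have hN : ∀ u b : ℝ, 0 ≤ b →
        Real.sqrt ((-u * b) ^ 2 + b ^ 2) = b * Real.sqrt (1 + u ^ 2) := by
      intro u b hb
      rw [show (-u * b) ^ 2 + b ^ 2 = b ^ 2 * (1 + u ^ 2) by ring,
        Real.sqrt_mul (sq_nonneg b), Real.sqrt_sq hb]
    rw [hN _ _ hbpos.le]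
    have hR1 : 1 ≤ Real.sqrt (1 + deriv σb τ ^ 2) := by
      have h := Real.sqrt_le_sqrt (show (1:ℝ) ≤ 1 + deriv σb τ ^ 2 by nlinarith)
      rwa [Real.sqrt_one] at h
    have hR2 : Real.sqrt (1 + deriv σb τ ^ 2) ≤ 3/2 := by
      have h := Real.sqrt_le_sqrt (show 1 + deriv σb τ ^ 2 ≤ (3/2) ^ 2 by nlinarith)
      rwa [Real.sqrt_sq (by norm_num)] at h
    obtain ⟨hml, hMu⟩ := hψbound τ hτ
    have hSpos : 0 < σb τ ^ μ := Real.rpow_pos_of_pos (hσpos τ) μ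
    exact sandwich_bound μ c Mψ mψ (lam ^ (-μ)) (σb τ ^ μ) (σb τ - τ * deriv σb τ)
      (Real.sqrt (1 + deriv σb τ ^ 2)) hcpos hXpos hSpos hDτ hμ.le (by linarith)
      hMu hml hcM hcm hR1 hR2
  · -- Lipschitz part
    intro p hp
    have hopen : IsOpen {q : ℝ × ℝ | |q.1| < q.2} :=
      isOpen_lt (continuous_fst.abs) continuous_snd
    obtain ⟨ε, hε, hball⟩ := Metric.isOpen_iff.mp hopen p hp
    have hsurj := surj_leaf σb hdiff.continuous hσb_even hσb_gt abar K hub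
    set Lb := 3 * (p.2 + ε) ^ μ / mψ with hLbdef
    have hLbpos : 0 < Lb := by
      have : 0 < p.2 := lt_of_le_of_lt (abs_nonneg _) hp
      positivity
    clear_value Lb
    refine ⟨Real.toNNReal Lb, ε, hε, ?_⟩
    rw [Set.inter_eq_self_of_subset_left hball]
    have hkey : ∀ q ∈ Metric.ball p ε, ‖fderiv ℝ w₀ q‖₊ ≤ Real.toNNReal Lb := by
      intro q hq
      have hqO : |q.1| < q.2 := hball hq
      obtain ⟨lam, τ, hlam, hq1, hq2⟩ := hsurj q hqO
      have hq' : q = (lam⁻¹ * τ, lam⁻¹ * σb τ) := Prod.ext hq1 hq2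
      obtain ⟨hbf, haf⟩ := grad_formula μ σb hdiff hσb_gt w₀ hw₀_diff hw₀_leaf lam τ hlam
        (ne_of_gt (hDpos τ))
      have hDτ : 0 < σb τ - τ * deriv σb τ := hDpos τ
      have hXpos : 0 < lam ^ (-μ) := Real.rpow_pos_of_pos hlam _
      have hbpos : 0 < (1 + μ) * lam ^ (-μ) / (σb τ - τ * deriv σb τ) := by positivity
      have hslt : |deriv σb τ| ≤ 1 := by
        rw [abs_le]
        refine ⟨?_, (hσ'lt τ).le⟩
        have := hσ'lt (-τ)
        rw [hσ'odd] at this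
        linarith
      have hop : ‖fderiv ℝ w₀ q‖ ≤
          2 * ((1 + μ) * lam ^ (-μ) / (σb τ - τ * deriv σb τ)) := by
        apply opnorm_pair _ _ (deriv σb τ) hbpos hslt
        · rw [hq']; exact haf
        · rw [hq']; exact hbf
      have hq2pos : 0 < q.2 := lt_of_le_of_lt (abs_nonneg _) hqO
      have hq2le : q.2 ≤ p.2 + ε := by
        have hqd := Metric.mem_ball.mp hq
        have h1 : |q.2 - p.2| ≤ dist q p := by
          rw [Prod.dist_eq]
          exact le_trans (le_of_eq (Real.dist_eq q.2 p.2).symm) (le_max_right _ _)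
        have := abs_le.mp (le_of_lt (lt_of_le_of_lt h1 hqd)) |>.2
        linarith
      have hbbLb : 2 * ((1 + μ) * lam ^ (-μ) / (σb τ - τ * deriv σb τ)) ≤ Lb := by
        have hσμ : 0 < σb τ ^ μ := Real.rpow_pos_of_pos (hσpos τ) μ
        have hqpow : q.2 ^ μ = lam ^ (-μ) * σb τ ^ μ := by
          rw [hq2, Real.mul_rpow (by positivity) (hσpos τ).le,
            Real.inv_rpow hlam.le, ← Real.rpow_neg hlam.le]
        have hψl := hψlow τ
        have hq2μ : q.2 ^ μ ≤ (p.2 + ε) ^ μ :=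
          Real.rpow_le_rpow hq2pos.le hq2le hμ.le
        rw [hLbdef, le_div_iff₀ hmpos]
        have expand : 2 * ((1 + μ) * lam ^ (-μ) / (σb τ - τ * deriv σb τ)) * mψ
            ≤ 2 * ((1 + μ) * lam ^ (-μ) / (σb τ - τ * deriv σb τ))
              * ((σb τ - τ * deriv σb τ) * σb τ ^ μ) := by
          apply mul_le_mul_of_nonneg_left hψl (by positivity)
        have hsimp : 2 * ((1 + μ) * lam ^ (-μ) / (σb τ - τ * deriv σb τ))
              * ((σb τ - τ * deriv σb τ) * σb τ ^ μ)
            = 2 * (1 + μ) * (lam ^ (-μ) * σb τ ^ μ) := by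
          field_simp
        rw [hsimp, ← hqpow] at expand
        have h5 : 2 * (1 + μ) * q.2 ^ μ ≤ 3 * q.2 ^ μ :=
          mul_le_mul_of_nonneg_right (by linarith : 2 * (1 + μ) ≤ (3:ℝ))
            (Real.rpow_nonneg hq2pos.le μ)
        calc 2 * ((1 + μ) * lam ^ (-μ) / (σb τ - τ * deriv σb τ)) * mψ
            ≤ 2 * (1 + μ) * q.2 ^ μ := expand
          _ ≤ 3 * q.2 ^ μ := h5
          _ ≤ 3 * (p.2 + ε) ^ μ := mul_le_mul_of_nonneg_left hq2μ (by norm_num)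
      have hfin : ‖fderiv ℝ w₀ q‖ ≤ Lb := le_trans hop hbbLb
      rw [← NNReal.coe_le_coe, coe_nnnorm, Real.coe_toNNReal Lb hLbpos.le]
      exact hfin
    exact (convex_ball p ε).lipschitzOnWith_of_nnnorm_hasFDerivWithin_le
      (fun x hx => ((hw₀_diff x (hball hx)).hasFDerivAt).hasFDerivWithinAt)
      hkey
end
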